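/- arXiv:1708.01833 — 4 statements merged into one kernel-verified Lean document; each statement's English description precedes it below -/
import Mathlib

section
/- Let M ∈ ℝ^{q×q} and b ∈ ℝ^q, and consider the affine ODE ẋ(t) = Mx(t) + b, t ≥ 0. The following are equivalent: (i) for every initial condition x₀ ∈ ℝ^q, the solution x(·) with x(0) = x₀ converges exponentially to an equilibrium, i.e., there exist x∞ ∈ ℝ^q with Mx∞ + b = 0 and constants c ≥ 0, λ > 0 such that ‖x(t) − x∞‖ ≤ c·e^{−λt} for all t ≥ 0; (ii) for every initial condition x₀ ∈ ℝ^q, the solution x(·) with x(0) = x₀ converges to some limit as t → ∞. -/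
/-!
If every solution converges, the limit `x∞` of a solution is an equilibrium, and since
`x + e^{tM} w` is again a solution for every `w`, the matrix exponential `e^{tM}` converges to
some `P`. A convergent continuous one-parameter semigroup converges exponentially fast:
`e^{tM} P = P e^{tM} = P` and `P² = P`, so `S t = e^{tM} - P` is again a semigroup, and
once `‖S t₀‖ ≤ e⁻¹` submultiplicativity gives `‖S t‖ ≤ C e^{-t/t₀}`. Finally
`x t - x∞ = e^{tM} (x 0 - x∞) = S t (x 0 - x∞)`, because `P (x 0 - x∞) = lim (x t - x∞) = 0`.
-/

open Filter Set Topology Real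

section Semigroup

variable {R : Type*} [NormedRing R] {S : ℝ → R}

theorem norm_nat_mul_add_le_of_semigroup
    (hmul : ∀ s t, 0 ≤ s → 0 ≤ t → S (s + t) = S s * S t) {t₀ : ℝ} (ht₀ : 0 ≤ t₀) (n : ℕ)
    {r : ℝ} (hr : 0 ≤ r) : ‖S (n * t₀ + r)‖ ≤ ‖S t₀‖ ^ n * ‖S r‖ := by
  induction n with
  | zero => simp
  | succ n ih =>
    have hsplit : ((n + 1 : ℕ) : ℝ) * t₀ + r = t₀ + (n * t₀ + r) := by push_cast; ring
    calc ‖S ((n + 1 : ℕ) * t₀ + r)‖ = ‖S t₀ * S (n * t₀ + r)‖ := by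
          rw [hsplit, hmul _ _ ht₀ (by positivity)]
      _ ≤ ‖S t₀‖ * (‖S t₀‖ ^ n * ‖S r‖) := by
          grw [norm_mul_le, ih]
      _ = ‖S t₀‖ ^ (n + 1) * ‖S r‖ := by ring

theorem exists_norm_le_exp_of_semigroup_tendsto_zero
    (hmul : ∀ s t, 0 ≤ s → 0 ≤ t → S (s + t) = S s * S t) (hcont : ContinuousOn S (Ici 0))
    (hS : Tendsto S atTop (𝓝 0)) :
    ∃ C, 0 ≤ C ∧ ∃ lam, 0 < lam ∧ ∀ t, 0 ≤ t → ‖S t‖ ≤ C * exp (-lam * t) := by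
  obtain ⟨t₀, hSt₀, ht₀⟩ : ∃ t₀, ‖S t₀‖ < exp (-1) ∧ 0 < t₀ :=
    ((tendsto_norm_zero.comp hS).eventually (gt_mem_nhds (exp_pos _)) |>.and
      (eventually_gt_atTop 0)).exists
  obtain ⟨C, hC⟩ := isCompact_Icc.exists_bound_of_continuousOn (hcont.mono Icc_subset_Ici_self)
  have hC₀ : 0 ≤ C := (norm_nonneg _).trans (hC 0 ⟨le_rfl, ht₀.le⟩)
  refine ⟨exp 1 * C, by positivity, 1 / t₀, by positivity, fun t ht => ?_⟩
  set n := ⌊t / t₀⌋₊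
  have hn : (n : ℝ) * t₀ ≤ t := (le_div_iff₀ ht₀).1 (Nat.floor_le (by positivity))
  have hn' : t / t₀ < n + 1 := Nat.lt_floor_add_one _
  calc ‖S t‖ = ‖S (n * t₀ + (t - n * t₀))‖ := by ring_nf
    _ ≤ ‖S t₀‖ ^ n * ‖S (t - n * t₀)‖ :=
        norm_nat_mul_add_le_of_semigroup hmul ht₀.le n (sub_nonneg.2 hn)
    _ ≤ exp (-1) ^ n * C := by
        gcongr
        refine hC _ ⟨sub_nonneg.2 hn, ?_⟩
        have := (div_lt_iff₀ ht₀).1 hn'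
        linarith
    _ = exp (-n) * C := by rw [← exp_nat_mul]; ring_nf
    _ ≤ exp (1 + -(1 / t₀) * t) * C := by
        gcongr
        rw [neg_mul, one_div_mul_eq_div]
        linarith
    _ = exp 1 * C * exp (-(1 / t₀) * t) := by rw [exp_add]; ring

variable {E : ℝ → R} {P : R}

theorem mul_eq_of_semigroup_tendsto
    (hmul : ∀ s t, 0 ≤ s → 0 ≤ t → E (s + t) = E s * E t) (hE : Tendsto E atTop (𝓝 P))
    {s : ℝ} (hs : 0 ≤ s) : E s * P = P ∧ P * E s = P := by
  have hleft : Tendsto (fun t => E s * E t) atTop (𝓝 P) :=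
    (hE.comp (tendsto_atTop_add_const_left atTop s tendsto_id)).congr'
      (eventually_ge_atTop 0 |>.mono fun t ht => hmul s t hs ht)
  have hright : Tendsto (fun t => E t * E s) atTop (𝓝 P) :=
    (hE.comp (tendsto_atTop_add_const_right atTop s tendsto_id)).congr'
      (eventually_ge_atTop 0 |>.mono fun t ht => hmul t s ht hs)
  exact ⟨tendsto_nhds_unique (hE.const_mul _) hleft,
    tendsto_nhds_unique (hE.mul_const _) hright⟩

theorem exists_norm_sub_le_exp_of_semigroup_tendsto
    (hmul : ∀ s t, 0 ≤ s → 0 ≤ t → E (s + t) = E s * E t) (hcont : ContinuousOn E (Ici 0))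
    (hE : Tendsto E atTop (𝓝 P)) :
    ∃ C, 0 ≤ C ∧ ∃ lam, 0 < lam ∧ ∀ t, 0 ≤ t → ‖E t - P‖ ≤ C * exp (-lam * t) := by
  have hPP : P * P = P :=
    tendsto_nhds_unique (hE.const_mul P)
      (tendsto_const_nhds.congr' (eventually_ge_atTop 0 |>.mono fun t ht =>
        (mul_eq_of_semigroup_tendsto hmul hE ht).2.symm))
  refine exists_norm_le_exp_of_semigroup_tendsto_zero (fun s t hs ht => ?_)
    (hcont.sub continuousOn_const) (by simpa using hE.sub_const P)
  obtain ⟨hsP, -⟩ := mul_eq_of_semigroup_tendsto hmul hE hs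
  obtain ⟨-, hPt⟩ := mul_eq_of_semigroup_tendsto hmul hE ht
  rw [hmul s t hs ht, sub_mul, mul_sub, mul_sub, hsP, hPt, hPP]
  abel

end Semigroup

theorem eq_zero_of_tendsto_of_hasDerivAt {F : Type*} [NormedAddCommGroup F] [NormedSpace ℝ F]
    {x x' : ℝ → F} {L L' : F} (hderiv : ∀ᶠ t in atTop, HasDerivAt x (x' t) t)
    (hx : Tendsto x atTop (𝓝 L)) (hx' : Tendsto x' atTop (𝓝 L')) : L' = 0 := by
  have hslope : Tendsto (fun t => x (t + 1) - x t) atTop (𝓝 L') := by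
    refine Metric.tendsto_nhds.2 fun ε hε => ?_
    obtain ⟨T, hT⟩ := eventually_atTop.1
      (hderiv.and (hx'.eventually (Metric.closedBall_mem_nhds L' (half_pos hε))))
    filter_upwards [eventually_ge_atTop T] with t ht
    -- mean value inequality for `s ↦ x s - s • L'`, whose derivative is small on `[T, ∞)`
    have hmvt := (convex_Ici T).norm_image_sub_le_of_norm_hasDerivWithin_le
      (f := fun s => x s - s • L') (f' := fun s => x' s - L') (C := ε / 2)
      (fun s hs => ((hT s hs).1.sub ((hasDerivAt_id' s).smul_const L')).hasDerivWithinAt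
        |>.congr_deriv (by rw [one_smul]))
      (fun s hs => by simpa [dist_eq_norm] using (hT s hs).2) (mem_Ici.2 ht)
      (mem_Ici.2 (by linarith : T ≤ t + 1))
    rw [dist_eq_norm]
    calc ‖x (t + 1) - x t - L'‖ = ‖x (t + 1) - (t + 1) • L' - (x t - t • L')‖ := by
          congr 1; rw [add_smul, one_smul]; abel
      _ ≤ ε / 2 := by simpa using hmvt
      _ < ε := half_lt_self hε
  refine tendsto_nhds_unique hslope ?_
  simpa using (hx.comp (tendsto_atTop_add_const_right atTop 1 tendsto_id)).sub hx

theorem ContinuousLinearMap.exists_tendsto_of_forall_tendsto_apply {α 𝕜 G ι : Type*}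
    [NontriviallyNormedField 𝕜] [CompleteSpace 𝕜] [NormedAddCommGroup G] [NormedSpace 𝕜 G]
    [Fintype ι] [DecidableEq ι] {l : Filter α} {F : α → (ι → 𝕜) →L[𝕜] G}
    (h : ∀ v, ∃ w, Tendsto (fun a => F a v) l (𝓝 w)) : ∃ P, Tendsto F l (𝓝 P) := by
  choose w hw using h
  let e := ContinuousLinearEquiv.piRing (𝕜 := 𝕜) (E := G) ι
  refine ⟨e.symm fun i => w (Pi.single i 1), ?_⟩
  have he : Tendsto (fun a => e (F a)) l (𝓝 fun i => w (Pi.single i 1)) :=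
    tendsto_pi_nhds.2 fun i => by simpa [e, ContinuousLinearEquiv.piRing] using hw (Pi.single i 1)
  simpa [Function.comp_def] using (e.symm.continuous.tendsto _).comp he

section AffineODE

variable {E : Type*} [NormedAddCommGroup E] [NormedSpace ℝ E]

def SolvesAffineODE (A : E →L[ℝ] E) (b : E) (x : ℝ → E) : Prop :=
  ∀ t, 0 ≤ t → HasDerivAt x (A (x t) + b) t

theorem SolvesAffineODE.equilibrium_of_tendsto {A : E →L[ℝ] E} {b : E} {x : ℝ → E}
    (hx : SolvesAffineODE A b x) {L : E} (hL : Tendsto x atTop (𝓝 L)) : A L + b = 0 :=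
  eq_zero_of_tendsto_of_hasDerivAt (eventually_ge_atTop 0 |>.mono hx) hL
    (((A.continuous.tendsto L).comp hL).add_const b)

variable [CompleteSpace E] (A : E →L[ℝ] E)

theorem hasDerivAt_exp_smul_apply (w : E) (t : ℝ) :
    HasDerivAt (fun s : ℝ => NormedSpace.exp (s • A) w) (A (NormedSpace.exp (t • A) w)) t := by
  simpa using (hasDerivAt_exp_smul_const' A t).clm_apply (hasDerivAt_const t w)

theorem eq_exp_smul_apply_of_hasDerivAt {z : ℝ → E}
    (hz : ∀ t, 0 ≤ t → HasDerivAt z (A (z t)) t) {t : ℝ} (ht : 0 ≤ t) :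
    z t = NormedSpace.exp (t • A) (z 0) := by
  refine ODE_solution_unique (v := fun _ => A) (fun _ => A.lipschitz)
    (fun s hs => (hz s hs.1).continuousAt.continuousWithinAt)
    (fun s hs => (hz s hs.1).hasDerivWithinAt)
    (fun s _ => (hasDerivAt_exp_smul_apply A _ s).continuousAt.continuousWithinAt)
    (fun s _ => (hasDerivAt_exp_smul_apply A _ s).hasDerivWithinAt)
    (by simp) ⟨ht, le_rfl⟩

theorem exp_add_smul (s t : ℝ) :
    NormedSpace.exp ((s + t) • A) = NormedSpace.exp (s • A) * NormedSpace.exp (t • A) := by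
  have hball (u : ℝ) : u • A ∈ Metric.eball 0 (NormedSpace.expSeries ℝ (E →L[ℝ] E)).radius :=
    (NormedSpace.expSeries_radius_eq_top ℝ (E →L[ℝ] E)).symm ▸ edist_lt_top _ _
  rw [add_smul]
  exact NormedSpace.exp_add_of_commute_of_mem_ball
    (((Commute.refl A).smul_left s).smul_right t) (hball s) (hball t)

namespace SolvesAffineODE

variable {A} {b : E} {x : ℝ → E}

theorem add_exp_smul_apply (hx : SolvesAffineODE A b x) (w : E) :
    SolvesAffineODE A b fun t => NormedSpace.exp (t • A) w + x t := fun t ht =>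
  ((hasDerivAt_exp_smul_apply A w t).add (hx t ht)).congr_deriv (by rw [map_add, add_assoc])

theorem sub_eq_exp_smul_apply (hx : SolvesAffineODE A b x) {L : E} (hL : A L + b = 0)
    {t : ℝ} (ht : 0 ≤ t) : x t - L = NormedSpace.exp (t • A) (x 0 - L) := by
  refine eq_exp_smul_apply_of_hasDerivAt A (z := fun s => x s - L) (fun s hs => ?_) ht
  have hb : b = -A L := eq_neg_of_add_eq_zero_right hL
  simpa [hb, ← sub_eq_add_neg] using (hx s hs).sub_const L

end SolvesAffineODE

end AffineODE

theorem tendsto_of_norm_sub_le_exp {α : Type*} [SeminormedAddCommGroup α] {x : ℝ → α} {l : α}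
    {c lam : ℝ} (hlam : 0 < lam) (h : ∀ t, 0 ≤ t → ‖x t - l‖ ≤ c * exp (-lam * t)) :
    Tendsto x atTop (𝓝 l) := by
  have hexp : Tendsto (fun t => c * exp (-lam * t)) atTop (𝓝 0) := by
    simpa [Function.comp_def] using (tendsto_exp_atBot.comp
      (tendsto_neg_atTop_atBot.comp (tendsto_id.const_mul_atTop hlam))).const_mul c
  exact tendsto_iff_norm_sub_tendsto_zero.2 <| squeeze_zero' (.of_forall fun _ => norm_nonneg _)
    (eventually_ge_atTop 0 |>.mono h) hexp

theorem SolvesAffineODE.exists_exp_decay {ι : Type*} [Fintype ι] [DecidableEq ι]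
    {A : (ι → ℝ) →L[ℝ] (ι → ℝ)} {b : ι → ℝ}
    (H : ∀ y, SolvesAffineODE A b y → ∃ l, Tendsto y atTop (𝓝 l))
    {x : ℝ → ι → ℝ} (hx : SolvesAffineODE A b x) :
    ∃ xinf, A xinf + b = 0 ∧ ∃ c, 0 ≤ c ∧ ∃ lam, 0 < lam ∧
      ∀ t, 0 ≤ t → ‖x t - xinf‖ ≤ c * exp (-lam * t) := by
  obtain ⟨xinf, hxinf⟩ := H x hx
  have heq := hx.equilibrium_of_tendsto hxinf
  obtain ⟨P, hP⟩ : ∃ P, Tendsto (fun t : ℝ => NormedSpace.exp (t • A)) atTop (𝓝 P) := by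
    refine ContinuousLinearMap.exists_tendsto_of_forall_tendsto_apply fun w => ?_
    obtain ⟨l, hl⟩ := H _ (hx.add_exp_smul_apply w)
    exact ⟨l - xinf, by simpa using hl.sub hxinf⟩
  obtain ⟨C, hC, lam, hlam, hdecay⟩ := exists_norm_sub_le_exp_of_semigroup_tendsto
    (fun s t _ _ => exp_add_smul A s t)
    (fun t _ => (hasDerivAt_exp_smul_const' A t).continuousAt.continuousWithinAt) hP
  set z₀ := x 0 - xinf
  have hPz₀ : P z₀ = 0 := by
    have hz : Tendsto (fun t => x t - xinf) atTop (𝓝 0) := by simpa using hxinf.sub_const xinf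
    refine tendsto_nhds_unique
      ((ContinuousLinearMap.apply ℝ _ z₀).continuous.tendsto P |>.comp hP) ?_
    exact hz.congr' (eventually_ge_atTop 0 |>.mono fun t ht => hx.sub_eq_exp_smul_apply heq ht)
  refine ⟨xinf, heq, C * ‖z₀‖, by positivity, lam, hlam, fun t ht => ?_⟩
  calc ‖x t - xinf‖ = ‖(NormedSpace.exp (t • A) - P) z₀‖ := by
        rw [hx.sub_eq_exp_smul_apply heq ht, sub_apply, hPz₀, sub_zero]
    _ ≤ ‖NormedSpace.exp (t • A) - P‖ * ‖z₀‖ := ContinuousLinearMap.le_opNorm _ _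
    _ ≤ C * exp (-lam * t) * ‖z₀‖ := by gcongr; exact hdecay t ht
    _ = C * ‖z₀‖ * exp (-lam * t) := by ring

theorem stmt_3 (q : ℕ) (M : Matrix (Fin q) (Fin q) ℝ) (b : Fin q → ℝ) :
    (∀ x : ℝ → (Fin q → ℝ),
        (∀ t : ℝ, 0 ≤ t →
          ∀ k : Fin q, HasDerivAt (fun s => x s k) (M.mulVec (x t) k + b k) t) →
        ∃ xinf : Fin q → ℝ, M.mulVec xinf + b = 0 ∧
          ∃ c : ℝ, 0 ≤ c ∧ ∃ lam : ℝ, 0 < lam ∧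
            ∀ t : ℝ, 0 ≤ t → ‖x t - xinf‖ ≤ c * Real.exp (-lam * t)) ↔
    (∀ x : ℝ → (Fin q → ℝ),
        (∀ t : ℝ, 0 ≤ t →
          ∀ k : Fin q, HasDerivAt (fun s => x s k) (M.mulVec (x t) k + b k) t) →
        ∃ xinf : Fin q → ℝ, Filter.Tendsto x Filter.atTop (nhds xinf)) := by
  set A := LinearMap.toContinuousLinearMap (Matrix.toLin' M)
  have hA (v : Fin q → ℝ) : M.mulVec v = A v := rfl
  have hsol (x : ℝ → Fin q → ℝ) :
      (∀ t : ℝ, 0 ≤ t → ∀ k : Fin q, HasDerivAt (fun s => x s k) (M.mulVec (x t) k + b k) t) ↔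
        SolvesAffineODE A b x := by
    simp only [SolvesAffineODE, hasDerivAt_pi, hA, Pi.add_apply]
  simp only [hsol]
  constructor
  · intro H x hx
    obtain ⟨xinf, -, c, -, lam, hlam, hbound⟩ := H x hx
    exact ⟨xinf, tendsto_of_norm_sub_le_exp hlam hbound⟩
  · exact fun H x hx => hx.exists_exp_decay H
end

section
/- In the RCC structure, a matrix X* ∈ ℝ^{r×p} is a least squares solution to AXB = F if and only if, setting Y* = AX* ∈ ℝ^{m×p}, the tuple (X₁,…,Xₙ,Y₁,…,Yₙ) = (X*,…,X*,Y*,…,Y*) is an optimal solution of problem (RCC-opt), i.e., it is feasible and attains the minimum of the objective over the feasible set. -/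
open Matrix

/-- Squared Frobenius norm of a real matrix: `‖M‖_F² = tr (Mᵀ M)`. -/
noncomputable def frobSq {α β : Type*} [Fintype α] [Fintype β] (M : Matrix α β ℝ) : ℝ :=
  Matrix.trace (Mᵀ * M)

/-- Frobenius inner product of real matrices: `⟨M,N⟩_F = tr (Mᵀ N)`. -/
noncomputable def frobInner {α β : Type*} [Fintype α] [Fintype β] (M N : Matrix α β ℝ) : ℝ :=
  Matrix.trace (Mᵀ * N)

/-- The weighted undirected graph with adjacency matrix `a` is connected: any two nodes are
joined by a path of adjacent nodes (nodes `u ≠ v` are adjacent iff `a u v > 0`). -/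
def GraphConnected {n : ℕ} (a : Matrix (Fin n) (Fin n) ℝ) : Prop :=
  ∀ i j : Fin n, Relation.ReflTransGen (fun u v : Fin n => u ≠ v ∧ 0 < a u v) i j

/-- Assemble a family of row blocks `M i ∈ ℝ^{d i × β}` into one matrix. -/
def blockRows {n : ℕ} {d : Fin n → ℕ} {β : Type*} (M : ∀ i, Matrix (Fin (d i)) β ℝ) :
    Matrix ((i : Fin n) × Fin (d i)) β ℝ :=
  Matrix.of fun s j => M s.1 s.2 j

/-- Assemble a family of column blocks `M i ∈ ℝ^{α × d i}` into one matrix. -/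
def blockCols {n : ℕ} {d : Fin n → ℕ} {α : Type*} (M : ∀ i, Matrix α (Fin (d i)) ℝ) :
    Matrix α ((i : Fin n) × Fin (d i)) ℝ :=
  Matrix.of fun k s => M s.1 k s.2

/-- The `i`-th row block of a matrix whose rows are partitioned according to `d`. -/
def rowBlk {n : ℕ} {d : Fin n → ℕ} {β : Type*}
    (Y : Matrix ((i : Fin n) × Fin (d i)) β ℝ) (i : Fin n) :
    Matrix (Fin (d i)) β ℝ :=
  Matrix.of fun k j => Y ⟨i, k⟩ j

/-- `[M]_R`: the matrix whose `i`-th row block is `M` and whose other row blocks are zero. -/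
def embedRow {n : ℕ} {d : Fin n → ℕ} {β : Type*} (i : Fin n)
    (M : Matrix (Fin (d i)) β ℝ) :
    Matrix ((i' : Fin n) × Fin (d i')) β ℝ :=
  Matrix.of fun s j => if h : s.1 = i then M (Fin.cast (congrArg d h) s.2) j else 0

/-- `[M]_C`: the matrix whose `i`-th column block is `M` and whose other column blocks are zero. -/
def embedCol {n : ℕ} {d : Fin n → ℕ} {α : Type*} (i : Fin n)
    (M : Matrix α (Fin (d i)) ℝ) :
    Matrix α ((i' : Fin n) × Fin (d i')) ℝ :=
  Matrix.of fun k s => if h : s.1 = i then M k (Fin.cast (congrArg d h) s.2) else 0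

/-- Feasibility for problem (RCC-opt): consensus of the `X_i` and `Y_i`, and the local
constraints `A_{vi} X_i = Y_i^{vi}`. -/
def RCCfeas {n r p : ℕ} {mdim : Fin n → ℕ}
    (Av : ∀ i, Matrix (Fin (mdim i)) (Fin r) ℝ)
    (X : Fin n → Matrix (Fin r) (Fin p) ℝ)
    (Y : Fin n → Matrix ((i : Fin n) × Fin (mdim i)) (Fin p) ℝ) : Prop :=
  (∀ i j, X i = X j) ∧ (∀ i j, Y i = Y j) ∧ (∀ i, Av i * X i = rowBlk (Y i) i)

/-- Objective of problem (RCC-opt): `Σ_i ‖Y_i B_{li} − F_{li}‖_F²`. -/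
noncomputable def RCCobj {n p : ℕ} {mdim qdim : Fin n → ℕ}
    (Bl : ∀ i, Matrix (Fin p) (Fin (qdim i)) ℝ)
    (Fl : ∀ i, Matrix ((i' : Fin n) × Fin (mdim i')) (Fin (qdim i)) ℝ)
    (Y : Fin n → Matrix ((i : Fin n) × Fin (mdim i)) (Fin p) ℝ) : ℝ :=
  ∑ i, frobSq (Y i * Bl i - Fl i)

/-! Consensus forces every feasible point of (RCC-opt) to be a constant tuple, and the local
constraints `A_{vi} X = Y^{vi}` pin the common `Y` down to `A X` row block by row block. So the
feasible points are exactly the tuples `(X, …, X, A X, …, A X)`, and on such a tuple the objective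
is `‖A X B − F‖_F²`, since the squared Frobenius norm is additive over column blocks. Both
problems therefore minimise the same function of `X`. -/

lemma frobSq_blockCols {n : ℕ} {d : Fin n → ℕ} {α : Type*} [Fintype α]
    (M : ∀ i, Matrix α (Fin (d i)) ℝ) :
    frobSq (blockCols M) = ∑ i, frobSq (M i) := by
  simp only [frobSq, Matrix.trace, Matrix.diag_apply, Matrix.mul_apply, Matrix.transpose_apply,
    blockCols, Matrix.of_apply]
  exact Fintype.sum_sigma _

lemma mul_blockCols {n : ℕ} {d : Fin n → ℕ} {α β : Type*} [Fintype β]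
    (Y : Matrix α β ℝ) (M : ∀ i, Matrix β (Fin (d i)) ℝ) :
    Y * blockCols M = blockCols fun i => Y * M i := by
  ext k s
  simp only [blockCols, Matrix.mul_apply, Matrix.of_apply]

lemma blockCols_sub {n : ℕ} {d : Fin n → ℕ} {α : Type*} (M N : ∀ i, Matrix α (Fin (d i)) ℝ) :
    blockCols (fun i => M i - N i) = blockCols M - blockCols N :=
  rfl

lemma rowBlk_blockRows_mul {n r p : ℕ} {mdim : Fin n → ℕ}
    (Av : ∀ i, Matrix (Fin (mdim i)) (Fin r) ℝ) (X : Matrix (Fin r) (Fin p) ℝ) (i : Fin n) :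
    rowBlk (blockRows Av * X) i = Av i * X := by
  ext k j
  simp only [rowBlk, blockRows, Matrix.mul_apply, Matrix.of_apply]

lemma RCCobj_const {n p : ℕ} {mdim qdim : Fin n → ℕ}
    (Bl : ∀ i, Matrix (Fin p) (Fin (qdim i)) ℝ)
    (Fl : ∀ i, Matrix ((i' : Fin n) × Fin (mdim i')) (Fin (qdim i)) ℝ)
    (Y : Matrix ((i : Fin n) × Fin (mdim i)) (Fin p) ℝ) :
    RCCobj Bl Fl (fun _ => Y) = frobSq (Y * blockCols Bl - blockCols Fl) := by
  rw [mul_blockCols, ← blockCols_sub, frobSq_blockCols]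
  rfl

lemma RCCfeas_const {n r p : ℕ} {mdim : Fin n → ℕ}
    (Av : ∀ i, Matrix (Fin (mdim i)) (Fin r) ℝ) (X : Matrix (Fin r) (Fin p) ℝ) :
    RCCfeas Av (fun _ => X) (fun _ => blockRows Av * X) :=
  ⟨fun _ _ => rfl, fun _ _ => rfl, fun i => (rowBlk_blockRows_mul Av X i).symm⟩

lemma RCCfeas.eq_blockRows_mul {n r p : ℕ} {mdim : Fin n → ℕ}
    {Av : ∀ i, Matrix (Fin (mdim i)) (Fin r) ℝ} {X : Fin n → Matrix (Fin r) (Fin p) ℝ}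
    {Y : Fin n → Matrix ((i : Fin n) × Fin (mdim i)) (Fin p) ℝ}
    (h : RCCfeas Av X Y) (i j : Fin n) :
    Y i = blockRows Av * X j := by
  obtain ⟨hX, hY, hloc⟩ := h
  ext ⟨k, a⟩ l
  calc Y i ⟨k, a⟩ l = rowBlk (Y k) k a l := by rw [hY i k]; rfl
    _ = (Av k * X j) a l := by rw [← hloc k, hX k j]
    _ = (blockRows Av * X j) ⟨k, a⟩ l := by rw [← rowBlk_blockRows_mul]; rfl

lemma RCCfeas.exists_eq_const {n r p : ℕ} {mdim : Fin n → ℕ}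
    {Av : ∀ i, Matrix (Fin (mdim i)) (Fin r) ℝ} {X : Fin n → Matrix (Fin r) (Fin p) ℝ}
    {Y : Fin n → Matrix ((i : Fin n) × Fin (mdim i)) (Fin p) ℝ}
    (h : RCCfeas Av X Y) :
    ∃ X₀, Y = fun _ => blockRows Av * X₀ := by
  rcases isEmpty_or_nonempty (Fin n) with hn | hn
  · exact ⟨0, funext isEmptyElim⟩
  · obtain ⟨j⟩ := hn
    exact ⟨X j, funext fun i => h.eq_blockRows_mul i j⟩

theorem stmt_4 (n r p : ℕ) (mdim qdim : Fin n → ℕ)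
    (Av : ∀ i, Matrix (Fin (mdim i)) (Fin r) ℝ)
    (Bl : ∀ i, Matrix (Fin p) (Fin (qdim i)) ℝ)
    (Fl : ∀ i, Matrix ((i' : Fin n) × Fin (mdim i')) (Fin (qdim i)) ℝ)
    (Xs : Matrix (Fin r) (Fin p) ℝ) :
    (∀ X : Matrix (Fin r) (Fin p) ℝ,
        frobSq (blockRows Av * Xs * blockCols Bl - blockCols Fl) ≤
          frobSq (blockRows Av * X * blockCols Bl - blockCols Fl)) ↔
      (RCCfeas Av (fun _ => Xs) (fun _ => blockRows Av * Xs) ∧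
        ∀ X' : Fin n → Matrix (Fin r) (Fin p) ℝ,
          ∀ Y' : Fin n → Matrix ((i : Fin n) × Fin (mdim i)) (Fin p) ℝ,
            RCCfeas Av X' Y' →
              RCCobj Bl Fl (fun _ => blockRows Av * Xs) ≤ RCCobj Bl Fl Y') := by
  constructor
  · intro hmin
    refine ⟨RCCfeas_const Av Xs, fun X' Y' hfeas => ?_⟩
    obtain ⟨X, rfl⟩ := hfeas.exists_eq_const
    rw [RCCobj_const, RCCobj_const]
    exact hmin X
  · rintro ⟨-, hopt⟩ X
    simpa only [RCCobj_const] using hopt _ _ (RCCfeas_const Av X)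
end

section
/- Suppose the weighted undirected graph a on n nodes is connected. In the RRR structure, X* = [X_{l1}*,…,X_{ln}*] ∈ ℝ^{r×p} is a least squares solution to AXB = F if and only if there exist Y₁*,…,Yₙ* ∈ ℝ^{r×q} and Z₁*,…,Zₙ* ∈ ℝ^{r×q} such that (X*, Y*, Z*) is an optimal solution of problem (RRR-opt), i.e., it is feasible and attains the minimum of the objective over the feasible set. -/
open Matrix

/-- Feasibility for problem (RRR-opt). -/
def RRRfeas {n r q : ℕ} {pdim : Fin n → ℕ}
    (a : Matrix (Fin n) (Fin n) ℝ)
    (Bv : ∀ i, Matrix (Fin (pdim i)) (Fin q) ℝ)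
    (Xl : ∀ i, Matrix (Fin r) (Fin (pdim i)) ℝ)
    (Y Z : Fin n → Matrix (Fin r) (Fin q) ℝ) : Prop :=
  (∀ i, (n : ℝ)⁻¹ • Y i - Xl i * Bv i + ∑ j, a i j • (Z i - Z j) = 0) ∧
  (∀ i j, Y i = Y j)

/-- Objective of problem (RRR-opt): `Σ_i ‖A_{vi} Y_i − F_{vi}‖_F²`. -/
noncomputable def RRRobj {n r q : ℕ} {mdim : Fin n → ℕ}
    (Av : ∀ i, Matrix (Fin (mdim i)) (Fin r) ℝ)
    (Fv : ∀ i, Matrix (Fin (mdim i)) (Fin q) ℝ)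
    (Y : Fin n → Matrix (Fin r) (Fin q) ℝ) : ℝ :=
  ∑ i, frobSq (Av i * Y i - Fv i)

/-- Right-hand side of the `X_{li}`-equation in algorithm (RRR-alg). -/
noncomputable def RRRrhsX {n r q : ℕ} {pdim : Fin n → ℕ}
    (Bv : ∀ i, Matrix (Fin (pdim i)) (Fin q) ℝ)
    (L1 : Fin n → Matrix (Fin r) (Fin q) ℝ) (i : Fin n) :
    Matrix (Fin r) (Fin (pdim i)) ℝ :=
  L1 i * (Bv i)ᵀ

/-- Right-hand side of the `Y_i`-equation in algorithm (RRR-alg). -/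
noncomputable def RRRrhsY {n r q : ℕ} {mdim : Fin n → ℕ}
    (a : Matrix (Fin n) (Fin n) ℝ)
    (Av : ∀ i, Matrix (Fin (mdim i)) (Fin r) ℝ)
    (Fv : ∀ i, Matrix (Fin (mdim i)) (Fin q) ℝ)
    (Y L1 L2 : Fin n → Matrix (Fin r) (Fin q) ℝ) (i : Fin n) :
    Matrix (Fin r) (Fin q) ℝ :=
  -((Av i)ᵀ * (Av i * Y i - Fv i)) - ∑ j, a i j • (Y i - Y j)
    - (n : ℝ)⁻¹ • L1 i - ∑ j, a i j • (L2 i - L2 j)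

/-- Right-hand side of the `Z_i`-equation in algorithm (RRR-alg). -/
noncomputable def RRRrhsZ {n r q : ℕ}
    (a : Matrix (Fin n) (Fin n) ℝ)
    (L1 : Fin n → Matrix (Fin r) (Fin q) ℝ) (i : Fin n) :
    Matrix (Fin r) (Fin q) ℝ :=
  -∑ j, a i j • (L1 i - L1 j)

/-- Right-hand side of the `Λ¹_i`-equation in algorithm (RRR-alg), with the derivative
feedbacks replaced by the right-hand sides that determine them. -/
noncomputable def RRRrhsL1 {n r q : ℕ} {mdim pdim : Fin n → ℕ}
    (a : Matrix (Fin n) (Fin n) ℝ)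
    (Av : ∀ i, Matrix (Fin (mdim i)) (Fin r) ℝ)
    (Bv : ∀ i, Matrix (Fin (pdim i)) (Fin q) ℝ)
    (Fv : ∀ i, Matrix (Fin (mdim i)) (Fin q) ℝ)
    (Xl : ∀ i, Matrix (Fin r) (Fin (pdim i)) ℝ)
    (Y Z L1 L2 : Fin n → Matrix (Fin r) (Fin q) ℝ) (i : Fin n) :
    Matrix (Fin r) (Fin q) ℝ :=
  (n : ℝ)⁻¹ • (Y i + RRRrhsY a Av Fv Y L1 L2 i)
    - (Xl i + RRRrhsX Bv L1 i) * Bv i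
    + ∑ j, a i j • (Z i - Z j) - ∑ j, a i j • (L1 i - L1 j)

/-- Right-hand side of the `Λ²_i`-equation in algorithm (RRR-alg), with the derivative
feedbacks replaced by the right-hand sides that determine them. -/
noncomputable def RRRrhsL2 {n r q : ℕ} {mdim : Fin n → ℕ}
    (a : Matrix (Fin n) (Fin n) ℝ)
    (Av : ∀ i, Matrix (Fin (mdim i)) (Fin r) ℝ)
    (Fv : ∀ i, Matrix (Fin (mdim i)) (Fin q) ℝ)
    (Y L1 L2 : Fin n → Matrix (Fin r) (Fin q) ℝ) (i : Fin n) :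
    Matrix (Fin r) (Fin q) ℝ :=
  ∑ j, a i j • (Y i - Y j)
    + ∑ j, a i j • (RRRrhsY a Av Fv Y L1 L2 i - RRRrhsY a Av Fv Y L1 L2 j)

/-- Equilibrium of algorithm (RRR-alg): all right-hand sides vanish. -/
noncomputable def RRRequil {n r q : ℕ} {mdim pdim : Fin n → ℕ}
    (a : Matrix (Fin n) (Fin n) ℝ)
    (Av : ∀ i, Matrix (Fin (mdim i)) (Fin r) ℝ)
    (Bv : ∀ i, Matrix (Fin (pdim i)) (Fin q) ℝ)
    (Fv : ∀ i, Matrix (Fin (mdim i)) (Fin q) ℝ)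
    (Xl : ∀ i, Matrix (Fin r) (Fin (pdim i)) ℝ)
    (Y Z L1 L2 : Fin n → Matrix (Fin r) (Fin q) ℝ) : Prop :=
  ∀ i, RRRrhsX Bv L1 i = 0 ∧ RRRrhsY a Av Fv Y L1 L2 i = 0 ∧
    RRRrhsZ a L1 i = 0 ∧ RRRrhsL1 a Av Bv Fv Xl Y Z L1 L2 i = 0 ∧
    RRRrhsL2 a Av Fv Y L1 L2 i = 0

/-!
At a feasible point of (RRR-opt) all `Y i` are equal, and summing the constraints over `i`
cancels the Laplacian terms (`a` is symmetric), so `Y i = ∑ j, X_{lj} B_{vj} = X B` and the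
objective equals `‖A X B - F‖_F²`. Conversely every `X` extends to a feasible point: `Z` must
solve `L Z = (X_{li} B_{vi} - X B / n)_i` for the weighted Laplacian `L`, whose right-hand side
sums to zero, and on a connected graph the kernel of `L` is the constants, so its range is
exactly the families summing to zero. Both problems therefore minimize the same function of `X`.
-/

open Finset

section Laplacian

variable {ι M : Type*} [Fintype ι] [AddCommGroup M] [Module ℝ M]

def laplacian (a : Matrix ι ι ℝ) : (ι → M) →ₗ[ℝ] (ι → M) where
  toFun z i := ∑ j, a i j • (z i - z j)
  map_add' x y := by
    funext i
    simp only [Pi.add_apply, ← sum_add_distrib, ← smul_add]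
    exact sum_congr rfl fun j _ => by abel_nf
  map_smul' c x := by
    funext i
    simp only [Pi.smul_apply, RingHom.id_apply, smul_sum, ← smul_sub, smul_comm c]

@[simp]
lemma laplacian_apply (a : Matrix ι ι ℝ) (z : ι → M) (i : ι) :
    laplacian a z i = ∑ j, a i j • (z i - z j) :=
  rfl

lemma sum_laplacian_eq_zero {a : Matrix ι ι ℝ} (hsym : ∀ i j, a i j = a j i) (z : ι → M) :
    ∑ i, laplacian a z i = 0 := by
  simp only [laplacian_apply, smul_sub, sum_sub_distrib]
  rw [sub_eq_zero, sum_comm]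
  simp only [hsym]

lemma sum_mul_laplacian {a : Matrix ι ι ℝ} (hsym : ∀ i j, a i j = a j i) (z : ι → ℝ) :
    ∑ i, z i * laplacian a z i = (∑ i, ∑ j, a i j * (z i - z j) ^ 2) / 2 := by
  have hswap : ∑ i, ∑ j, a i j * (z i * (z i - z j)) =
      ∑ i, ∑ j, a i j * (z j * (z j - z i)) := by
    rw [sum_comm]
    simp only [hsym]
  have hsplit : ∑ i, ∑ j, a i j * (z i - z j) ^ 2 =
      ∑ i, ∑ j, a i j * (z i * (z i - z j)) + ∑ i, ∑ j, a i j * (z j * (z j - z i)) := by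
    simp only [← sum_add_distrib]
    exact sum_congr rfl fun i _ => sum_congr rfl fun j _ => by ring
  rw [hsplit, ← hswap, ← two_mul, mul_div_cancel_left₀ _ two_ne_zero]
  simp only [laplacian_apply, smul_eq_mul, mul_sum]
  exact sum_congr rfl fun i _ => sum_congr rfl fun j _ => by ring

end Laplacian

section Connected

variable {n : ℕ} {a : Matrix (Fin n) (Fin n) ℝ}

lemma eq_of_laplacian_eq_zero_of_pos (hsym : ∀ i j, a i j = a j i) (hnonneg : ∀ i j, 0 ≤ a i j)
    {z : Fin n → ℝ} (hz : laplacian a z = 0) {i j : Fin n} (hij : 0 < a i j) : z i = z j := by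
  have hterm_nonneg : ∀ i j, 0 ≤ a i j * (z i - z j) ^ 2 :=
    fun i j => mul_nonneg (hnonneg i j) (sq_nonneg _)
  have hsum : ∑ i, ∑ j, a i j * (z i - z j) ^ 2 = 0 := by
    have := sum_mul_laplacian hsym z
    simp only [hz, Pi.zero_apply, mul_zero, sum_const_zero] at this
    linarith
  have hrow := (sum_eq_zero_iff_of_nonneg fun i _ => sum_nonneg fun j _ => hterm_nonneg i j).mp
    hsum i (mem_univ i)
  have hterm := (sum_eq_zero_iff_of_nonneg fun j _ => hterm_nonneg i j).mp hrow j (mem_univ j)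
  rw [mul_eq_zero, sq_eq_zero_iff, sub_eq_zero] at hterm
  exact hterm.resolve_left hij.ne'

lemma eq_of_laplacian_eq_zero (hsym : ∀ i j, a i j = a j i) (hnonneg : ∀ i j, 0 ≤ a i j)
    (hconn : GraphConnected a) {z : Fin n → ℝ} (hz : laplacian a z = 0) (i j : Fin n) :
    z i = z j := by
  induction hconn i j with
  | refl => rfl
  | tail _ hadj ih => exact ih.trans (eq_of_laplacian_eq_zero_of_pos hsym hnonneg hz hadj.2)

lemma ker_laplacian_le_span_one (hsym : ∀ i j, a i j = a j i) (hnonneg : ∀ i j, 0 ≤ a i j)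
    (hconn : GraphConnected a) :
    LinearMap.ker (laplacian a : (Fin n → ℝ) →ₗ[ℝ] _) ≤ ℝ ∙ (fun _ => 1) := by
  intro z hz
  rcases isEmpty_or_nonempty (Fin n) with hempty | ⟨⟨i₀⟩⟩
  · simp [Subsingleton.elim z 0]
  · refine Submodule.mem_span_singleton.mpr ⟨z i₀, funext fun i => ?_⟩
    simp [eq_of_laplacian_eq_zero hsym hnonneg hconn hz i i₀]

/-- Rank–nullity: the range of the Laplacian has codimension one, as does the hyperplane
`∑ i, w i = 0` that contains it. -/
lemma exists_laplacian_eq (hn : 0 < n) (hsym : ∀ i j, a i j = a j i)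
    (hnonneg : ∀ i j, 0 ≤ a i j) (hconn : GraphConnected a) {w : Fin n → ℝ}
    (hw : ∑ i, w i = 0) : ∃ z, laplacian a z = w := by
  set total : Module.Dual ℝ (Fin n → ℝ) := ∑ i, LinearMap.proj i
  have htotal (v : Fin n → ℝ) : total v = ∑ i, v i := by simp [total]
  have htotal_ne : total ≠ 0 := fun h => by
    simpa [htotal] using LinearMap.congr_fun h (Pi.single ⟨0, hn⟩ 1)
  have hle : LinearMap.range (laplacian a) ≤ LinearMap.ker total := by
    rintro _ ⟨z, rfl⟩
    rw [LinearMap.mem_ker, htotal, sum_laplacian_eq_zero hsym]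
  have hker : Module.finrank ℝ (LinearMap.ker (laplacian a : (Fin n → ℝ) →ₗ[ℝ] _)) ≤ 1 :=
    (Submodule.finrank_mono (ker_laplacian_le_span_one hsym hnonneg hconn)).trans
      ((finrank_span_le_card _).trans (by simp))
  have hrank := (laplacian a : (Fin n → ℝ) →ₗ[ℝ] _).finrank_range_add_finrank_ker
  have hcodim := Module.Dual.finrank_ker_add_one_of_ne_zero htotal_ne
  simp only [Module.finrank_fin_fun] at hrank hcodim
  have heq := Submodule.eq_of_le_of_finrank_le hle (by omega)
  rw [← LinearMap.mem_range, heq, LinearMap.mem_ker, htotal]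
  exact hw

lemma exists_laplacian_eq_matrix {r q : ℕ} (hn : 0 < n) (hsym : ∀ i j, a i j = a j i)
    (hnonneg : ∀ i j, 0 ≤ a i j) (hconn : GraphConnected a)
    {W : Fin n → Matrix (Fin r) (Fin q) ℝ} (hW : ∑ i, W i = 0) :
    ∃ Z, laplacian a Z = W := by
  have hentry (k : Fin r) (l : Fin q) : ∃ z : Fin n → ℝ, laplacian a z = fun i => W i k l :=
    exists_laplacian_eq hn hsym hnonneg hconn (by simpa [Matrix.sum_apply] using congr_fun₂ hW k l)
  choose z hz using hentry
  refine ⟨fun i => Matrix.of fun k l => z k l i, funext fun i => ?_⟩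
  ext k l
  simpa [Matrix.sum_apply] using congr_fun (hz k l) i

end Connected

section Blocks

variable {n : ℕ}

def colBlk {d : Fin n → ℕ} {α : Type*} (X : Matrix α ((i : Fin n) × Fin (d i)) ℝ) (i : Fin n) :
    Matrix α (Fin (d i)) ℝ :=
  Matrix.of fun k s => X k ⟨i, s⟩

@[simp]
lemma blockCols_colBlk {d : Fin n → ℕ} {α : Type*} (X : Matrix α ((i : Fin n) × Fin (d i)) ℝ) :
    blockCols (colBlk X) = X :=
  rfl

lemma blockCols_mul_blockRows {d : Fin n → ℕ} {α β : Type*}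
    (X : ∀ i, Matrix α (Fin (d i)) ℝ) (B : ∀ i, Matrix (Fin (d i)) β ℝ) :
    blockCols X * blockRows B = ∑ i, X i * B i := by
  ext k j
  rw [Matrix.mul_apply, ← univ_sigma_univ, sum_sigma, Matrix.sum_apply]
  rfl

lemma blockRows_mul {d : Fin n → ℕ} {α β : Type*} [Fintype α]
    (A : ∀ i, Matrix (Fin (d i)) α ℝ) (N : Matrix α β ℝ) :
    blockRows A * N = blockRows fun i => A i * N :=
  rfl

lemma blockRows_sub {d : Fin n → ℕ} {β : Type*} (M N : ∀ i, Matrix (Fin (d i)) β ℝ) :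
    blockRows M - blockRows N = blockRows fun i => M i - N i :=
  rfl

lemma frobSq_eq_sum_sq {α β : Type*} [Fintype α] [Fintype β] (M : Matrix α β ℝ) :
    frobSq M = ∑ i, ∑ j, M i j ^ 2 := by
  rw [frobSq, Matrix.trace, sum_comm]
  simp [Matrix.mul_apply, sq]

lemma frobSq_blockRows {d : Fin n → ℕ} {β : Type*} [Fintype β] (M : ∀ i, Matrix (Fin (d i)) β ℝ) :
    frobSq (blockRows M) = ∑ i, frobSq (M i) := by
  simp only [frobSq_eq_sum_sq, ← univ_sigma_univ, sum_sigma]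
  rfl

end Blocks

lemma sum_fin_inv_smul_const {n : ℕ} {M : Type*} [AddCommGroup M] [Module ℝ M] (hn : 0 < n)
    (C : M) : ∑ _i : Fin n, (n : ℝ)⁻¹ • C = C := by
  rw [sum_const, card_univ, Fintype.card_fin, ← Nat.cast_smul_eq_nsmul ℝ, smul_smul,
    mul_inv_cancel₀ (by positivity), one_smul]

section RRR

variable {n r q : ℕ} {mdim pdim : Fin n → ℕ} {a : Matrix (Fin n) (Fin n) ℝ}
  {Bv : ∀ i, Matrix (Fin (pdim i)) (Fin q) ℝ} {Xl : ∀ i, Matrix (Fin r) (Fin (pdim i)) ℝ}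
  {Y Z : Fin n → Matrix (Fin r) (Fin q) ℝ}

lemma RRRfeas.eq_blockCols_mul_blockRows (hn : 0 < n) (hsym : ∀ i j, a i j = a j i)
    (h : RRRfeas a Bv Xl Y Z) (i : Fin n) : Y i = blockCols Xl * blockRows Bv := by
  obtain ⟨hcons, hY⟩ := h
  have hsum := sum_eq_zero fun j (_ : j ∈ univ) => hcons j
  rw [sum_add_distrib, sum_sub_distrib] at hsum
  change _ - _ + ∑ j, laplacian a Z j = 0 at hsum
  rw [sum_laplacian_eq_zero hsym, add_zero, sub_eq_zero, ← blockCols_mul_blockRows] at hsum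
  rw [← hsum, sum_congr rfl fun j _ => by rw [hY j i], sum_fin_inv_smul_const hn]

lemma exists_RRRfeas (hn : 0 < n) (hsym : ∀ i j, a i j = a j i) (hnonneg : ∀ i j, 0 ≤ a i j)
    (hconn : GraphConnected a) (Bv : ∀ i, Matrix (Fin (pdim i)) (Fin q) ℝ)
    (Xl : ∀ i, Matrix (Fin r) (Fin (pdim i)) ℝ) : ∃ Y Z, RRRfeas a Bv Xl Y Z := by
  set C := blockCols Xl * blockRows Bv
  have hW : ∑ i, (Xl i * Bv i - (n : ℝ)⁻¹ • C) = 0 := by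
    rw [sum_sub_distrib, ← blockCols_mul_blockRows, sum_fin_inv_smul_const hn, sub_self]
  obtain ⟨Z, hZ⟩ := exists_laplacian_eq_matrix hn hsym hnonneg hconn hW
  refine ⟨fun _ => C, Z, fun i => ?_, fun _ _ => rfl⟩
  change _ - _ + laplacian a Z i = 0
  rw [congr_fun hZ i]
  abel

lemma RRRfeas.RRRobj_eq (hn : 0 < n) (hsym : ∀ i j, a i j = a j i) (h : RRRfeas a Bv Xl Y Z)
    (Av : ∀ i, Matrix (Fin (mdim i)) (Fin r) ℝ) (Fv : ∀ i, Matrix (Fin (mdim i)) (Fin q) ℝ) :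
    RRRobj Av Fv Y = frobSq (blockRows Av * blockCols Xl * blockRows Bv - blockRows Fv) := by
  rw [Matrix.mul_assoc, blockRows_mul, blockRows_sub, frobSq_blockRows, RRRobj]
  simp only [h.eq_blockCols_mul_blockRows hn hsym]

end RRR

theorem stmt_7_general (n r q : ℕ) (hn : 0 < n) (mdim pdim : Fin n → ℕ)
    (a : Matrix (Fin n) (Fin n) ℝ)
    (hsym : ∀ i j, a i j = a j i) (hnonneg : ∀ i j, 0 ≤ a i j)
    (hconn : GraphConnected a)
    (Av : ∀ i, Matrix (Fin (mdim i)) (Fin r) ℝ)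
    (Bv : ∀ i, Matrix (Fin (pdim i)) (Fin q) ℝ)
    (Fv : ∀ i, Matrix (Fin (mdim i)) (Fin q) ℝ)
    (Xl : ∀ i, Matrix (Fin r) (Fin (pdim i)) ℝ) :
    (∀ X' : Matrix (Fin r) ((i : Fin n) × Fin (pdim i)) ℝ,
        frobSq (blockRows Av * blockCols Xl * blockRows Bv - blockRows Fv) ≤
          frobSq (blockRows Av * X' * blockRows Bv - blockRows Fv)) ↔
      (∃ Y Z : Fin n → Matrix (Fin r) (Fin q) ℝ,
        RRRfeas a Bv Xl Y Z ∧
          ∀ Xl' : ∀ i, Matrix (Fin r) (Fin (pdim i)) ℝ,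
            ∀ Y' Z' : Fin n → Matrix (Fin r) (Fin q) ℝ,
              RRRfeas a Bv Xl' Y' Z' → RRRobj Av Fv Y ≤ RRRobj Av Fv Y') := by
  constructor
  · intro hls
    obtain ⟨Y, Z, hfeas⟩ := exists_RRRfeas hn hsym hnonneg hconn Bv Xl
    refine ⟨Y, Z, hfeas, fun Xl' Y' Z' hfeas' => ?_⟩
    rw [hfeas.RRRobj_eq hn hsym, hfeas'.RRRobj_eq hn hsym]
    exact hls _
  · rintro ⟨Y, Z, hfeas, hopt⟩ X'
    obtain ⟨Y', Z', hfeas'⟩ := exists_RRRfeas hn hsym hnonneg hconn Bv (colBlk X')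
    have hle := hopt _ Y' Z' hfeas'
    rwa [hfeas.RRRobj_eq hn hsym, hfeas'.RRRobj_eq hn hsym, blockCols_colBlk] at hle

theorem stmt_7 (n r q : ℕ) (hn : 0 < n) (mdim pdim : Fin n → ℕ)
    (a : Matrix (Fin n) (Fin n) ℝ)
    (hsym : ∀ i j, a i j = a j i) (hnonneg : ∀ i j, 0 ≤ a i j)
    (hdiag : ∀ i, a i i = 0) (hconn : GraphConnected a)
    (Av : ∀ i, Matrix (Fin (mdim i)) (Fin r) ℝ)
    (Bv : ∀ i, Matrix (Fin (pdim i)) (Fin q) ℝ)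
    (Fv : ∀ i, Matrix (Fin (mdim i)) (Fin q) ℝ)
    (Xl : ∀ i, Matrix (Fin r) (Fin (pdim i)) ℝ) :
    (∀ X' : Matrix (Fin r) ((i : Fin n) × Fin (pdim i)) ℝ,
        frobSq (blockRows Av * blockCols Xl * blockRows Bv - blockRows Fv) ≤
          frobSq (blockRows Av * X' * blockRows Bv - blockRows Fv)) ↔
      (∃ Y Z : Fin n → Matrix (Fin r) (Fin q) ℝ,
        RRRfeas a Bv Xl Y Z ∧
          ∀ Xl' : ∀ i, Matrix (Fin r) (Fin (pdim i)) ℝ,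
            ∀ Y' Z' : Fin n → Matrix (Fin r) (Fin q) ℝ,
              RRRfeas a Bv Xl' Y' Z' → RRRobj Av Fv Y ≤ RRRobj Av Fv Y') :=
  stmt_7_general n r q hn mdim pdim a hsym hnonneg hconn Av Bv Fv Xl
end

section
/- Suppose the weighted undirected graph a on n nodes is connected. A tuple (X*, Y*, Z*, U*, W*) is an optimal solution of problem (CCR-opt) if and only if there exist Λ¹_i* ∈ ℝ^{r×p}, Λ²_i* ∈ ℝ^{m×q}, Λ³_i* ∈ ℝ^{r×q} (i = 1,…,n) such that (X*, Y*, Z*, U*, W*, Λ¹*, Λ²*, Λ³*) is an equilibrium of algorithm (CCR-alg), i.e., all the right-hand sides of (CCR-alg) vanish at this point (with all derivative-feedback terms set to zero). -/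
/-!
All constraints of (CCR-opt) are homogeneous, so its feasible set is a linear subspace and the
objective is a convex quadratic on it: a feasible point is optimal iff its residual
`Gᵢ = A_{li} Y_{vi} − [F_{vi}]_R − Uᵢ` is Frobenius-orthogonal to `A_{li} Y'_{vi} − U'ᵢ` for every
feasible point. At an equilibrium `Λ² = G`, `(Λ³ᵢ)^{vi} = −A_{li}ᵀ Gᵢ`, and `Λ²`, `Λ³` lie in the
kernel of the graph Laplacian `L`; as `L` is self-adjoint, this orthogonality follows. Conversely,
on a connected graph `ker L` consists of the consensus families and `range L` of the families
with zero sum. Testing orthogonality against two kinds of feasible directions gives `L G = 0` and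
`H Bᵀ = 0`, where `H` stacks the blocks `A_{li}ᵀ Gᵢ` and `B = Σᵢ [B_{li}]_C`; the multipliers are then
`Λ² = G`, the constant family `Λ³ᵢ = −H`, and any `Λ¹` with `L Λ¹ = (−H [B_{li}]_Cᵀ)ᵢ`.
-/

open Matrix

/-- Feasibility for problem (CCR-opt). -/
def CCRfeas {n p : ℕ} {rdim qdim mdim : Fin n → ℕ}
    (a : Matrix (Fin n) (Fin n) ℝ)
    (Bl : ∀ i, Matrix (Fin p) (Fin (qdim i)) ℝ)
    (X : Fin n → Matrix ((i : Fin n) × Fin (rdim i)) (Fin p) ℝ)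
    (Yv : ∀ i, Matrix (Fin (rdim i)) ((i' : Fin n) × Fin (qdim i')) ℝ)
    (Z : Fin n → Matrix ((i : Fin n) × Fin (rdim i)) ((i' : Fin n) × Fin (qdim i')) ℝ)
    (U W : Fin n → Matrix ((i : Fin n) × Fin (mdim i)) ((i' : Fin n) × Fin (qdim i')) ℝ) :
    Prop :=
  (∀ i j, X i = X j) ∧
  (∀ i, U i = ∑ j, a i j • (W i - W j)) ∧
  (∀ i, embedRow i (Yv i) - X i * embedCol i (Bl i) - ∑ j, a i j • (Z i - Z j) = 0)

/-- Objective of problem (CCR-opt): `Σ_i ‖A_{li} Y_{vi} − [F_{vi}]_R − U_i‖_F²`. -/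
noncomputable def CCRobj {n : ℕ} {rdim qdim mdim : Fin n → ℕ}
    (Al : ∀ i, Matrix ((i' : Fin n) × Fin (mdim i')) (Fin (rdim i)) ℝ)
    (Fv : ∀ i, Matrix (Fin (mdim i)) ((i' : Fin n) × Fin (qdim i')) ℝ)
    (Yv : ∀ i, Matrix (Fin (rdim i)) ((i' : Fin n) × Fin (qdim i')) ℝ)
    (U : Fin n → Matrix ((i : Fin n) × Fin (mdim i)) ((i' : Fin n) × Fin (qdim i')) ℝ) : ℝ :=
  ∑ i, frobSq (Al i * Yv i - embedRow i (Fv i) - U i)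

/-- Right-hand side of the `X_i`-equation in algorithm (CCR-alg). -/
noncomputable def CCRrhsX {n p : ℕ} {rdim qdim : Fin n → ℕ}
    (a : Matrix (Fin n) (Fin n) ℝ)
    (Bl : ∀ i, Matrix (Fin p) (Fin (qdim i)) ℝ)
    (X L1 : Fin n → Matrix ((i : Fin n) × Fin (rdim i)) (Fin p) ℝ)
    (L3 : Fin n → Matrix ((i : Fin n) × Fin (rdim i)) ((i' : Fin n) × Fin (qdim i')) ℝ)
    (i : Fin n) : Matrix ((i : Fin n) × Fin (rdim i)) (Fin p) ℝ :=
  L3 i * (embedCol i (Bl i))ᵀ - ∑ j, a i j • (L1 i - L1 j) - ∑ j, a i j • (X i - X j)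

/-- Right-hand side of the `Y_{vi}`-equation in algorithm (CCR-alg). -/
noncomputable def CCRrhsY {n : ℕ} {rdim qdim mdim : Fin n → ℕ}
    (Al : ∀ i, Matrix ((i' : Fin n) × Fin (mdim i')) (Fin (rdim i)) ℝ)
    (Fv : ∀ i, Matrix (Fin (mdim i)) ((i' : Fin n) × Fin (qdim i')) ℝ)
    (Yv : ∀ i, Matrix (Fin (rdim i)) ((i' : Fin n) × Fin (qdim i')) ℝ)
    (U : Fin n → Matrix ((i : Fin n) × Fin (mdim i)) ((i' : Fin n) × Fin (qdim i')) ℝ)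
    (L3 : Fin n → Matrix ((i : Fin n) × Fin (rdim i)) ((i' : Fin n) × Fin (qdim i')) ℝ)
    (i : Fin n) : Matrix (Fin (rdim i)) ((i' : Fin n) × Fin (qdim i')) ℝ :=
  -((Al i)ᵀ * (Al i * Yv i - embedRow i (Fv i) - U i)) - rowBlk (L3 i) i

/-- Right-hand side of the `U_i`-equation in algorithm (CCR-alg). -/
noncomputable def CCRrhsU {n : ℕ} {rdim qdim mdim : Fin n → ℕ}
    (Al : ∀ i, Matrix ((i' : Fin n) × Fin (mdim i')) (Fin (rdim i)) ℝ)
    (Fv : ∀ i, Matrix (Fin (mdim i)) ((i' : Fin n) × Fin (qdim i')) ℝ)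
    (Yv : ∀ i, Matrix (Fin (rdim i)) ((i' : Fin n) × Fin (qdim i')) ℝ)
    (U L2 : Fin n → Matrix ((i : Fin n) × Fin (mdim i)) ((i' : Fin n) × Fin (qdim i')) ℝ)
    (i : Fin n) : Matrix ((i : Fin n) × Fin (mdim i)) ((i' : Fin n) × Fin (qdim i')) ℝ :=
  Al i * Yv i - embedRow i (Fv i) - U i - L2 i

/-- Right-hand side of the `W_i`-equation in algorithm (CCR-alg). -/
noncomputable def CCRrhsW {n : ℕ} {qdim mdim : Fin n → ℕ}
    (a : Matrix (Fin n) (Fin n) ℝ)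
    (L2 : Fin n → Matrix ((i : Fin n) × Fin (mdim i)) ((i' : Fin n) × Fin (qdim i')) ℝ)
    (i : Fin n) : Matrix ((i : Fin n) × Fin (mdim i)) ((i' : Fin n) × Fin (qdim i')) ℝ :=
  ∑ j, a i j • (L2 i - L2 j)

/-- Right-hand side of the `Z_i`-equation in algorithm (CCR-alg). -/
noncomputable def CCRrhsZ {n : ℕ} {rdim qdim : Fin n → ℕ}
    (a : Matrix (Fin n) (Fin n) ℝ)
    (L3 : Fin n → Matrix ((i : Fin n) × Fin (rdim i)) ((i' : Fin n) × Fin (qdim i')) ℝ)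
    (i : Fin n) : Matrix ((i : Fin n) × Fin (rdim i)) ((i' : Fin n) × Fin (qdim i')) ℝ :=
  ∑ j, a i j • (L3 i - L3 j)

/-- Right-hand side of the `Λ¹_i`-equation in algorithm (CCR-alg). -/
noncomputable def CCRrhsL1 {n p : ℕ} {rdim : Fin n → ℕ}
    (a : Matrix (Fin n) (Fin n) ℝ)
    (X : Fin n → Matrix ((i : Fin n) × Fin (rdim i)) (Fin p) ℝ)
    (i : Fin n) : Matrix ((i : Fin n) × Fin (rdim i)) (Fin p) ℝ :=
  ∑ j, a i j • (X i - X j)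

/-- Right-hand side of the `Λ²_i`-equation in algorithm (CCR-alg), with the derivative
feedback replaced by the right-hand side that determines it. -/
noncomputable def CCRrhsL2 {n : ℕ} {rdim qdim mdim : Fin n → ℕ}
    (a : Matrix (Fin n) (Fin n) ℝ)
    (Al : ∀ i, Matrix ((i' : Fin n) × Fin (mdim i')) (Fin (rdim i)) ℝ)
    (Fv : ∀ i, Matrix (Fin (mdim i)) ((i' : Fin n) × Fin (qdim i')) ℝ)
    (Yv : ∀ i, Matrix (Fin (rdim i)) ((i' : Fin n) × Fin (qdim i')) ℝ)
    (U W L2 : Fin n → Matrix ((i : Fin n) × Fin (mdim i)) ((i' : Fin n) × Fin (qdim i')) ℝ)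
    (i : Fin n) : Matrix ((i : Fin n) × Fin (mdim i)) ((i' : Fin n) × Fin (qdim i')) ℝ :=
  U i + CCRrhsU Al Fv Yv U L2 i - ∑ j, a i j • (W i - W j) - ∑ j, a i j • (L2 i - L2 j)

/-- Right-hand side of the `Λ³_i`-equation in algorithm (CCR-alg), with the derivative
feedback replaced by the right-hand side that determines it. -/
noncomputable def CCRrhsL3 {n p : ℕ} {rdim qdim mdim : Fin n → ℕ}
    (a : Matrix (Fin n) (Fin n) ℝ)
    (Al : ∀ i, Matrix ((i' : Fin n) × Fin (mdim i')) (Fin (rdim i)) ℝ)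
    (Bl : ∀ i, Matrix (Fin p) (Fin (qdim i)) ℝ)
    (Fv : ∀ i, Matrix (Fin (mdim i)) ((i' : Fin n) × Fin (qdim i')) ℝ)
    (X : Fin n → Matrix ((i : Fin n) × Fin (rdim i)) (Fin p) ℝ)
    (Yv : ∀ i, Matrix (Fin (rdim i)) ((i' : Fin n) × Fin (qdim i')) ℝ)
    (Z : Fin n → Matrix ((i : Fin n) × Fin (rdim i)) ((i' : Fin n) × Fin (qdim i')) ℝ)
    (U L2 : Fin n → Matrix ((i : Fin n) × Fin (mdim i)) ((i' : Fin n) × Fin (qdim i')) ℝ)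
    (L3 : Fin n → Matrix ((i : Fin n) × Fin (rdim i)) ((i' : Fin n) × Fin (qdim i')) ℝ)
    (i : Fin n) : Matrix ((i : Fin n) × Fin (rdim i)) ((i' : Fin n) × Fin (qdim i')) ℝ :=
  embedRow i (Yv i) + embedRow i (CCRrhsY Al Fv Yv U L3 i)
    - X i * embedCol i (Bl i) - ∑ j, a i j • (Z i - Z j) - ∑ j, a i j • (L3 i - L3 j)

/-- Equilibrium of algorithm (CCR-alg): all right-hand sides vanish. -/
noncomputable def CCRequil {n p : ℕ} {rdim qdim mdim : Fin n → ℕ}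
    (a : Matrix (Fin n) (Fin n) ℝ)
    (Al : ∀ i, Matrix ((i' : Fin n) × Fin (mdim i')) (Fin (rdim i)) ℝ)
    (Bl : ∀ i, Matrix (Fin p) (Fin (qdim i)) ℝ)
    (Fv : ∀ i, Matrix (Fin (mdim i)) ((i' : Fin n) × Fin (qdim i')) ℝ)
    (X : Fin n → Matrix ((i : Fin n) × Fin (rdim i)) (Fin p) ℝ)
    (Yv : ∀ i, Matrix (Fin (rdim i)) ((i' : Fin n) × Fin (qdim i')) ℝ)
    (Z : Fin n → Matrix ((i : Fin n) × Fin (rdim i)) ((i' : Fin n) × Fin (qdim i')) ℝ)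
    (U W : Fin n → Matrix ((i : Fin n) × Fin (mdim i)) ((i' : Fin n) × Fin (qdim i')) ℝ)
    (L1 : Fin n → Matrix ((i : Fin n) × Fin (rdim i)) (Fin p) ℝ)
    (L2 : Fin n → Matrix ((i : Fin n) × Fin (mdim i)) ((i' : Fin n) × Fin (qdim i')) ℝ)
    (L3 : Fin n → Matrix ((i : Fin n) × Fin (rdim i)) ((i' : Fin n) × Fin (qdim i')) ℝ) :
    Prop :=
  ∀ i, CCRrhsX a Bl X L1 L3 i = 0 ∧ CCRrhsY Al Fv Yv U L3 i = 0 ∧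
    CCRrhsU Al Fv Yv U L2 i = 0 ∧ CCRrhsW a L2 i = 0 ∧ CCRrhsZ a L3 i = 0 ∧
    CCRrhsL1 a X i = 0 ∧ CCRrhsL2 a Al Fv Yv U W L2 i = 0 ∧
    CCRrhsL3 a Al Bl Fv X Yv Z U L2 L3 i = 0

section Frobenius

variable {α β : Type*} [Fintype α] [Fintype β]

theorem frobInner_eq_vec_dotProduct (M N : Matrix α β ℝ) : frobInner M N = vec M ⬝ᵥ vec N :=
  (vec_dotProduct_vec M N).symm

theorem frobInner_comm (M N : Matrix α β ℝ) : frobInner M N = frobInner N M := by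
  simp only [frobInner_eq_vec_dotProduct, dotProduct_comm]

theorem frobInner_add_left (M N P : Matrix α β ℝ) :
    frobInner (M + N) P = frobInner M P + frobInner N P := by
  simp only [frobInner_eq_vec_dotProduct, vec_add, add_dotProduct]

theorem frobInner_smul_left (c : ℝ) (M N : Matrix α β ℝ) :
    frobInner (c • M) N = c * frobInner M N := by
  simp only [frobInner_eq_vec_dotProduct, vec_smul, smul_dotProduct, smul_eq_mul]

theorem frobInner_add_right (M N P : Matrix α β ℝ) :
    frobInner M (N + P) = frobInner M N + frobInner M P := by
  simp only [frobInner_eq_vec_dotProduct, vec_add, dotProduct_add]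

theorem frobInner_smul_right (c : ℝ) (M N : Matrix α β ℝ) :
    frobInner M (c • N) = c * frobInner M N := by
  simp only [frobInner_eq_vec_dotProduct, vec_smul, dotProduct_smul, smul_eq_mul]

variable (α β) in
noncomputable def frobInnerBilin : Matrix α β ℝ →ₗ[ℝ] Matrix α β ℝ →ₗ[ℝ] ℝ :=
  LinearMap.mk₂ ℝ frobInner frobInner_add_left frobInner_smul_left frobInner_add_right
    frobInner_smul_right

theorem frobInner_sub_right (M N P : Matrix α β ℝ) :
    frobInner M (N - P) = frobInner M N - frobInner M P :=
  map_sub (frobInnerBilin α β M) N P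

theorem frobInner_zero_left (M : Matrix α β ℝ) : frobInner 0 M = 0 :=
  LinearMap.map_zero₂ (frobInnerBilin α β) M

theorem frobInner_zero_right (M : Matrix α β ℝ) : frobInner M 0 = 0 :=
  map_zero (frobInnerBilin α β M)

theorem frobInner_neg_left (M N : Matrix α β ℝ) : frobInner (-M) N = -frobInner M N :=
  LinearMap.map_neg₂ (frobInnerBilin α β) M N

theorem frobInner_sum_left {ι : Type*} (s : Finset ι) (M : ι → Matrix α β ℝ)
    (N : Matrix α β ℝ) : frobInner (∑ i ∈ s, M i) N = ∑ i ∈ s, frobInner (M i) N := by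
  simp only [frobInner_eq_vec_dotProduct, vec_sum, sum_dotProduct]

theorem frobInner_transpose_mul_left {γ : Type*} [Fintype γ] (A : Matrix γ α ℝ)
    (G : Matrix γ β ℝ) (Y : Matrix α β ℝ) :
    frobInner (Aᵀ * G) Y = frobInner G (A * Y) := by
  simp only [frobInner, transpose_mul, transpose_transpose, Matrix.mul_assoc]

theorem frobInner_mul_transpose_left {γ : Type*} [Fintype γ] (S : Matrix α β ℝ)
    (X : Matrix α γ ℝ) (B : Matrix γ β ℝ) :
    frobInner (S * Bᵀ) X = frobInner S (X * B) := by
  simp only [frobInner, transpose_mul, transpose_transpose, ← Matrix.mul_assoc]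
  exact (trace_mul_cycle Sᵀ X B).symm

theorem frobSq_eq_frobInner (M : Matrix α β ℝ) : frobSq M = frobInner M M := rfl

theorem frobSq_nonneg (M : Matrix α β ℝ) : 0 ≤ frobSq M := by
  rw [frobSq_eq_frobInner, frobInner_eq_vec_dotProduct]
  exact Finset.sum_nonneg fun _ _ => mul_self_nonneg _

theorem frobSq_eq_zero_iff {M : Matrix α β ℝ} : frobSq M = 0 ↔ M = 0 := by
  rw [frobSq_eq_frobInner, frobInner_eq_vec_dotProduct, dotProduct_self_eq_zero, vec_eq_zero_iff]

theorem frobSq_add (M N : Matrix α β ℝ) :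
    frobSq (M + N) = frobSq M + 2 * frobInner M N + frobSq N := by
  simp only [frobSq_eq_frobInner, frobInner_add_left, frobInner_add_right, frobInner_comm N M]
  ring

theorem frobSq_smul (c : ℝ) (M : Matrix α β ℝ) : frobSq (c • M) = c ^ 2 * frobSq M := by
  simp only [frobSq_eq_frobInner, frobInner_smul_left, frobInner_smul_right]
  ring

end Frobenius

section GraphLaplacian

variable {n : ℕ} {V W : Type*} [AddCommGroup V] [Module ℝ V] [AddCommGroup W] [Module ℝ W]
  (a : Matrix (Fin n) (Fin n) ℝ)

def graphLaplacian : (Fin n → V) →ₗ[ℝ] Fin n → V where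
  toFun x i := ∑ j, a i j • (x i - x j)
  map_add' x y := funext fun i => by
    simp only [Pi.add_apply, ← Finset.sum_add_distrib, ← smul_add, add_sub_add_comm]
  map_smul' c x := funext fun i => by
    simp only [Pi.smul_apply, RingHom.id_apply, Finset.smul_sum, ← smul_sub, smul_comm c]

theorem graphLaplacian_apply (x : Fin n → V) (i : Fin n) :
    graphLaplacian a x i = ∑ j, a i j • (x i - x j) := rfl

theorem graphLaplacian_map (f : V →ₗ[ℝ] W) (x : Fin n → V) (i : Fin n) :
    graphLaplacian a (fun j => f (x j)) i = f (graphLaplacian a x i) := by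
  simp only [graphLaplacian_apply, map_sum, map_smul, map_sub]

variable {a}

theorem sum_graphLaplacian (hsym : ∀ i j, a i j = a j i) (x : Fin n → V) :
    ∑ i, graphLaplacian a x i = 0 := by
  simp only [graphLaplacian_apply, smul_sub, Finset.sum_sub_distrib]
  rw [sub_eq_zero, Finset.sum_comm]
  simp only [hsym]

theorem sum_graphLaplacian_pairing (hsym : ∀ i j, a i j = a j i) (B : V →ₗ[ℝ] W →ₗ[ℝ] ℝ)
    (x : Fin n → V) (y : Fin n → W) :
    ∑ i, B (x i) (graphLaplacian a y i) = ∑ i, B (graphLaplacian a x i) (y i) := by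
  simp only [graphLaplacian_apply, map_sum, map_smul, map_sub, LinearMap.sum_apply,
    LinearMap.smul_apply, LinearMap.sub_apply, smul_eq_mul, mul_sub, Finset.sum_sub_distrib]
  congr 1
  rw [Finset.sum_comm]
  simp only [hsym]

theorem two_mul_sum_mul_graphLaplacian (hsym : ∀ i j, a i j = a j i) (x : Fin n → ℝ) :
    2 * ∑ i, x i * graphLaplacian a x i = ∑ i, ∑ j, a i j * (x i - x j) ^ 2 := by
  have hswap : ∑ i, ∑ j, a i j * (x i * (x i - x j)) = ∑ i, ∑ j, a i j * (x j * (x j - x i)) := by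
    rw [Finset.sum_comm]
    simp only [hsym]
  have hexpand : ∑ i, x i * graphLaplacian a x i = ∑ i, ∑ j, a i j * (x i * (x i - x j)) :=
    Finset.sum_congr rfl fun i _ => by
      simp only [graphLaplacian_apply, smul_eq_mul, Finset.mul_sum]
      exact Finset.sum_congr rfl fun j _ => by ring
  rw [hexpand, two_mul]
  nth_rewrite 2 [hswap]
  simp only [← Finset.sum_add_distrib]
  exact Finset.sum_congr rfl fun i _ => Finset.sum_congr rfl fun j _ => by ring

theorem eq_of_graphLaplacian_eq_zero_of_pos (hsym : ∀ i j, a i j = a j i)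
    (hnonneg : ∀ i j, 0 ≤ a i j) {x : Fin n → ℝ} (hx : graphLaplacian a x = 0) {u v : Fin n}
    (huv : 0 < a u v) : x u = x v := by
  have hterm_nonneg : ∀ u v, 0 ≤ a u v * (x u - x v) ^ 2 :=
    fun u v => mul_nonneg (hnonneg u v) (sq_nonneg _)
  have henergy : ∑ u, ∑ v, a u v * (x u - x v) ^ 2 = 0 := by
    simp [← two_mul_sum_mul_graphLaplacian hsym, hx]
  have h := (Finset.sum_eq_zero_iff_of_nonneg fun v _ => hterm_nonneg u v).1
    ((Finset.sum_eq_zero_iff_of_nonneg fun u _ =>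
      Finset.sum_nonneg fun v _ => hterm_nonneg u v).1 henergy u (Finset.mem_univ u))
    v (Finset.mem_univ v)
  rw [mul_eq_zero, pow_eq_zero_iff two_ne_zero, sub_eq_zero] at h
  exact h.resolve_left huv.ne'

theorem eq_of_graphLaplacian_eq_zero (hsym : ∀ i j, a i j = a j i)
    (hnonneg : ∀ i j, 0 ≤ a i j) (hconn : GraphConnected a) {x : Fin n → V}
    (hx : graphLaplacian a x = 0) (i j : Fin n) : x i = x j := by
  induction hconn i j with
  | refl => rfl
  | @tail u v _ huv ih =>
    refine ih.trans (sub_eq_zero.1 ((Module.forall_dual_apply_eq_zero_iff ℝ _).1 fun φ => ?_))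
    have hφx : graphLaplacian a (fun k => φ (x k)) = 0 :=
      funext fun k => by rw [graphLaplacian_map, hx, Pi.zero_apply, map_zero, Pi.zero_apply]
    rw [map_sub, eq_of_graphLaplacian_eq_zero_of_pos hsym hnonneg hφx huv.2, sub_self]

theorem graphLaplacian_eq_zero_of_forall_eq {x : Fin n → V} (hx : ∀ i j, x i = x j) :
    graphLaplacian a x = 0 := by
  ext i
  rw [graphLaplacian_apply, Pi.zero_apply]
  exact Finset.sum_eq_zero fun j _ => by rw [hx i j, sub_self, smul_zero]

theorem exists_graphLaplacian_eq [FiniteDimensional ℝ V] (hsym : ∀ i j, a i j = a j i)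
    (hnonneg : ∀ i j, 0 ≤ a i j) (hconn : GraphConnected a) {y : Fin n → V}
    (hy : ∑ i, y i = 0) : ∃ x, graphLaplacian a x = y := by
  obtain rfl | hn := n.eq_zero_or_pos
  · exact ⟨0, funext fun i => i.elim0⟩
  let S : (Fin n → V) →ₗ[ℝ] V := ∑ i, LinearMap.proj i
  let const : V →ₗ[ℝ] Fin n → V := LinearMap.pi fun _ => LinearMap.id
  have hS_apply (x : Fin n → V) : S x = ∑ i, x i := by simp [S]
  have hS : Function.Surjective S := fun v => ⟨Pi.single ⟨0, hn⟩ v, by simp [hS_apply]⟩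
  have hrange : LinearMap.range (graphLaplacian a) ≤ LinearMap.ker S := by
    rintro _ ⟨x, rfl⟩
    rw [LinearMap.mem_ker, hS_apply, sum_graphLaplacian hsym]
  have hker : LinearMap.ker (graphLaplacian a) ≤ LinearMap.range const := fun x hx =>
    ⟨x ⟨0, hn⟩, funext fun i => (eq_of_graphLaplacian_eq_zero hsym hnonneg hconn hx _ _)⟩
  have heq : LinearMap.range (graphLaplacian a) = LinearMap.ker S := by
    refine Submodule.eq_of_le_of_finrank_le hrange ?_
    have h1 := LinearMap.finrank_range_add_finrank_ker (graphLaplacian a : (Fin n → V) →ₗ[ℝ] _)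
    have h2 := LinearMap.finrank_range_add_finrank_ker S
    have h3 := Submodule.finrank_mono hker
    have h4 := LinearMap.finrank_range_le const
    rw [LinearMap.range_eq_top.2 hS, finrank_top] at h2
    omega
  exact (heq ▸ (LinearMap.mem_ker.2 ((hS_apply y).trans hy)) :
    y ∈ LinearMap.range (graphLaplacian a))

end GraphLaplacian

theorem sum_frobInner_graphLaplacian {n : ℕ} {α β : Type*} [Fintype α] [Fintype β]
    {a : Matrix (Fin n) (Fin n) ℝ} (hsym : ∀ i j, a i j = a j i) (x y : Fin n → Matrix α β ℝ) :
    ∑ i, frobInner (x i) (graphLaplacian a y i) = ∑ i, frobInner (graphLaplacian a x i) (y i) :=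
  sum_graphLaplacian_pairing hsym (frobInnerBilin α β) x y

section Blocks

variable {n : ℕ} {d : Fin n → ℕ} {β : Type*}

theorem embedRow_add (i : Fin n) (M N : Matrix (Fin (d i)) β ℝ) :
    embedRow i (M + N) = embedRow i M + embedRow i N := by
  ext ⟨i', k⟩ j
  by_cases h : i' = i
  · subst h; simp [embedRow]
  · simp [embedRow, h]

theorem embedRow_smul (i : Fin n) (c : ℝ) (M : Matrix (Fin (d i)) β ℝ) :
    embedRow i (c • M) = c • embedRow i M := by
  ext ⟨i', k⟩ j
  by_cases h : i' = i
  · subst h; simp [embedRow]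
  · simp [embedRow, h]

theorem embedRow_zero (i : Fin n) : embedRow i (0 : Matrix (Fin (d i)) β ℝ) = 0 := by
  simpa using embedRow_smul i 0 (0 : Matrix (Fin (d i)) β ℝ)

theorem sum_embedRow_rowBlk (M : Matrix ((i : Fin n) × Fin (d i)) β ℝ) :
    ∑ i, embedRow i (rowBlk M i) = M := by
  ext ⟨i, k⟩ j
  rw [Matrix.sum_apply, Finset.sum_eq_single i]
  · simp [embedRow, rowBlk]
  · intro i' _ hi'
    simp [embedRow, Ne.symm hi']
  · simp

variable [Fintype β]

theorem frobInner_embedRow (i : Fin n) (M : Matrix (Fin (d i)) β ℝ)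
    (N : Matrix ((i' : Fin n) × Fin (d i')) β ℝ) :
    frobInner (embedRow i M) N = frobInner M (rowBlk N i) := by
  simp only [frobInner_eq_vec_dotProduct, dotProduct, vec, ← Finset.univ_product_univ,
    Finset.sum_product, ← Finset.univ_sigma_univ, Finset.sum_sigma]
  refine Finset.sum_congr rfl fun j _ => ?_
  rw [Finset.sum_eq_single i]
  · simp [embedRow, rowBlk]
  · intro i' _ hi'
    simp [embedRow, hi']
  · simp

theorem frobInner_blockRows (H : ∀ i, Matrix (Fin (d i)) β ℝ)
    (N : Matrix ((i' : Fin n) × Fin (d i')) β ℝ) :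
    frobInner (blockRows H) N = ∑ i, frobInner (H i) (rowBlk N i) := by
  conv_lhs => rw [← sum_embedRow_rowBlk (blockRows H)]
  simp only [frobInner_sum_left, frobInner_embedRow]
  rfl

end Blocks

section CCR

variable {n p : ℕ} {rdim qdim mdim : Fin n → ℕ} {a : Matrix (Fin n) (Fin n) ℝ}
  {Al : ∀ i, Matrix ((i' : Fin n) × Fin (mdim i')) (Fin (rdim i)) ℝ}
  {Bl : ∀ i, Matrix (Fin p) (Fin (qdim i)) ℝ}
  {Fv : ∀ i, Matrix (Fin (mdim i)) ((i' : Fin n) × Fin (qdim i')) ℝ}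
  {X X' L1 : Fin n → Matrix ((i : Fin n) × Fin (rdim i)) (Fin p) ℝ}
  {Yv Yv' : ∀ i, Matrix (Fin (rdim i)) ((i' : Fin n) × Fin (qdim i')) ℝ}
  {Z Z' L3 : Fin n → Matrix ((i : Fin n) × Fin (rdim i)) ((i' : Fin n) × Fin (qdim i')) ℝ}
  {U U' W W' L2 : Fin n → Matrix ((i : Fin n) × Fin (mdim i)) ((i' : Fin n) × Fin (qdim i')) ℝ}

variable (Al Fv Yv U) in
noncomputable def CCRresidual (i : Fin n) :
    Matrix ((i' : Fin n) × Fin (mdim i')) ((i' : Fin n) × Fin (qdim i')) ℝ :=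
  Al i * Yv i - embedRow i (Fv i) - U i

variable (a Al Bl Fv Yv U) in
def CCRstationary : Prop :=
  ∀ (X' : Fin n → Matrix ((i : Fin n) × Fin (rdim i)) (Fin p) ℝ)
    (Yv' : ∀ i, Matrix (Fin (rdim i)) ((i' : Fin n) × Fin (qdim i')) ℝ)
    (Z' : Fin n → Matrix ((i : Fin n) × Fin (rdim i)) ((i' : Fin n) × Fin (qdim i')) ℝ)
    (U' W' : Fin n → Matrix ((i : Fin n) × Fin (mdim i)) ((i' : Fin n) × Fin (qdim i')) ℝ),
    CCRfeas a Bl X' Yv' Z' U' W' →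
      ∑ i, frobInner (CCRresidual Al Fv Yv U i) (Al i * Yv' i - U' i) = 0

theorem CCRfeas_iff : CCRfeas a Bl X Yv Z U W ↔
    (∀ i j, X i = X j) ∧ (∀ i, U i = graphLaplacian a W i) ∧
      ∀ i, embedRow i (Yv i) - X i * embedCol i (Bl i) - graphLaplacian a Z i = 0 :=
  Iff.rfl

theorem CCRfeas.add_smul (h : CCRfeas a Bl X Yv Z U W) (h' : CCRfeas a Bl X' Yv' Z' U' W')
    (t : ℝ) : CCRfeas a Bl (X + t • X') (Yv + t • Yv') (Z + t • Z') (U + t • U') (W + t • W') := by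
  obtain ⟨hX, hU, hY⟩ := CCRfeas_iff.1 h
  obtain ⟨hX', hU', hY'⟩ := CCRfeas_iff.1 h'
  refine CCRfeas_iff.2 ⟨fun i j => ?_, fun i => ?_, fun i => ?_⟩
  · simp only [Pi.add_apply, Pi.smul_apply, hX i j, hX' i j]
  · simp only [map_add, map_smul, Pi.add_apply, Pi.smul_apply, hU i, hU' i]
  · simp only [map_add, map_smul, Pi.add_apply, Pi.smul_apply, embedRow_add, embedRow_smul,
      Matrix.add_mul, Matrix.smul_mul]
    linear_combination (norm := module) hY i + t • hY' i

theorem CCRobj_add_smul (ΔY : ∀ i, Matrix (Fin (rdim i)) ((i' : Fin n) × Fin (qdim i')) ℝ)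
    (ΔU : Fin n → Matrix ((i : Fin n) × Fin (mdim i)) ((i' : Fin n) × Fin (qdim i')) ℝ)
    (t : ℝ) :
    CCRobj Al Fv (Yv + t • ΔY) (U + t • ΔU) = CCRobj Al Fv Yv U
      + 2 * t * ∑ i, frobInner (CCRresidual Al Fv Yv U i) (Al i * ΔY i - ΔU i)
      + t ^ 2 * ∑ i, frobSq (Al i * ΔY i - ΔU i) := by
  have h i : Al i * (Yv + t • ΔY) i - embedRow i (Fv i) - (U + t • ΔU) i
      = CCRresidual Al Fv Yv U i + t • (Al i * ΔY i - ΔU i) := by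
    simp only [CCRresidual, Pi.add_apply, Pi.smul_apply, Matrix.mul_add, Matrix.mul_smul,
      smul_sub]
    abel
  simp only [CCRobj, h, frobSq_add, frobSq_smul, frobInner_smul_right, Finset.sum_add_distrib,
    Finset.mul_sum, CCRresidual]
  ring_nf

theorem CCRfeas.minimizes_iff_stationary (h : CCRfeas a Bl X Yv Z U W) :
    (∀ (X' : Fin n → Matrix ((i : Fin n) × Fin (rdim i)) (Fin p) ℝ)
      (Yv' : ∀ i, Matrix (Fin (rdim i)) ((i' : Fin n) × Fin (qdim i')) ℝ)
      (Z' : Fin n → Matrix ((i : Fin n) × Fin (rdim i)) ((i' : Fin n) × Fin (qdim i')) ℝ)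
      (U' W' : Fin n → Matrix ((i : Fin n) × Fin (mdim i)) ((i' : Fin n) × Fin (qdim i')) ℝ),
      CCRfeas a Bl X' Yv' Z' U' W' → CCRobj Al Fv Yv U ≤ CCRobj Al Fv Yv' U') ↔
      CCRstationary a Al Bl Fv Yv U := by
  constructor
  · intro hmin X' Yv' Z' U' W' h'
    set c := ∑ i, frobInner (CCRresidual Al Fv Yv U i) (Al i * Yv' i - U' i)
    set q := ∑ i, frobSq (Al i * Yv' i - U' i)
    have hquad : ∀ t : ℝ, 0 ≤ q * (t * t) + 2 * c * t + 0 := fun t => by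
      have := hmin _ _ _ _ _ (h.add_smul h' t)
      rw [CCRobj_add_smul] at this
      linarith
    have h2c : (2 * c) ^ 2 ≤ 0 := by simpa [discrim] using discrim_le_zero hquad
    nlinarith [sq_nonneg c]
  · intro hstat X' Yv' Z' U' W' h'
    have hcross : ∑ i, frobInner (CCRresidual Al Fv Yv U i)
        (Al i * (Yv' - Yv) i - (U' - U) i) = 0 := by
      have hsplit i : Al i * (Yv' - Yv) i - (U' - U) i
          = (Al i * Yv' i - U' i) - (Al i * Yv i - U i) := by
        rw [Pi.sub_apply, Pi.sub_apply, Matrix.mul_sub, sub_sub_sub_comm]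
      rw [Finset.sum_congr rfl fun i _ => by rw [hsplit, frobInner_sub_right],
        Finset.sum_sub_distrib, hstat _ _ _ _ _ h', hstat _ _ _ _ _ h, sub_self]
    have hexp := CCRobj_add_smul (Al := Al) (Fv := Fv) (Yv := Yv) (U := U) (Yv' - Yv) (U' - U) 1
    rw [one_smul, one_smul, add_sub_cancel, add_sub_cancel, hcross] at hexp
    rw [hexp]
    have := Finset.sum_nonneg fun i (_ : i ∈ Finset.univ) =>
      frobSq_nonneg (Al i * (Yv' - Yv) i - (U' - U) i)
    linarith

theorem CCRequil_iff : CCRequil a Al Bl Fv X Yv Z U W L1 L2 L3 ↔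
    (∀ i, L3 i * (embedCol i (Bl i))ᵀ = graphLaplacian a L1 i + graphLaplacian a X i) ∧
    (∀ i, rowBlk (L3 i) i = -((Al i)ᵀ * CCRresidual Al Fv Yv U i)) ∧
    L2 = CCRresidual Al Fv Yv U ∧ graphLaplacian a L2 = 0 ∧ graphLaplacian a L3 = 0 ∧
    graphLaplacian a X = 0 ∧ (∀ i, U i = graphLaplacian a W i) ∧
    ∀ i, embedRow i (Yv i) - X i * embedCol i (Bl i) - graphLaplacian a Z i = 0 := by
  have rhsX_eq_zero i : CCRrhsX a Bl X L1 L3 i = 0 ↔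
      L3 i * (embedCol i (Bl i))ᵀ = graphLaplacian a L1 i + graphLaplacian a X i := by
    rw [CCRrhsX, sub_sub, sub_eq_zero]; rfl
  have rhsY_eq_zero i : CCRrhsY Al Fv Yv U L3 i = 0 ↔
      rowBlk (L3 i) i = -((Al i)ᵀ * CCRresidual Al Fv Yv U i) := by
    rw [CCRrhsY, sub_eq_zero, eq_comm]; rfl
  have rhsU_eq_zero i : CCRrhsU Al Fv Yv U L2 i = 0 ↔ L2 i = CCRresidual Al Fv Yv U i := by
    rw [CCRrhsU, sub_eq_zero, eq_comm]; rfl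
  have rhsL2_eq i : CCRrhsL2 a Al Fv Yv U W L2 i = U i + CCRrhsU Al Fv Yv U L2 i
      - graphLaplacian a W i - graphLaplacian a L2 i := rfl
  have rhsL3_eq i : CCRrhsL3 a Al Bl Fv X Yv Z U L2 L3 i = embedRow i (Yv i)
      + embedRow i (CCRrhsY Al Fv Yv U L3 i) - X i * embedCol i (Bl i)
      - graphLaplacian a Z i - graphLaplacian a L3 i := rfl
  simp only [CCRequil, forall_and, funext_iff, Pi.zero_apply, rhsX_eq_zero, rhsY_eq_zero,
    rhsU_eq_zero]
  refine and_congr_right fun _ => and_congr_right fun hY => and_congr_right fun hU =>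
    and_congr_right fun (hL2 : ∀ i, graphLaplacian a L2 i = 0) =>
      and_congr_right fun (hL3 : ∀ i, graphLaplacian a L3 i = 0) => and_congr_right fun _ =>
      and_congr (forall_congr' fun i => ?_) (forall_congr' fun i => ?_)
  · rw [rhsL2_eq, (rhsU_eq_zero i).2 (hU i), hL2 i, add_zero, sub_zero, sub_eq_zero]
  · rw [rhsL3_eq, (rhsY_eq_zero i).2 (hY i), hL3 i, embedRow_zero, add_zero, sub_zero]

theorem CCRequil.feas (hsym : ∀ i j, a i j = a j i) (hnonneg : ∀ i j, 0 ≤ a i j)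
    (hconn : GraphConnected a) (h : CCRequil a Al Bl Fv X Yv Z U W L1 L2 L3) :
    CCRfeas a Bl X Yv Z U W := by
  obtain ⟨-, -, -, -, -, hX, hU, hY⟩ := CCRequil_iff.1 h
  exact ⟨eq_of_graphLaplacian_eq_zero hsym hnonneg hconn hX, hU, hY⟩

theorem CCRequil.stationary (hsym : ∀ i j, a i j = a j i)
    (h : CCRequil a Al Bl Fv X Yv Z U W L1 L2 L3) : CCRstationary a Al Bl Fv Yv U := by
  obtain ⟨hL1, hrowL3, rfl, hL2, hL3, hX, -, -⟩ := CCRequil_iff.1 h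
  intro X' Yv' Z' U' W' h'
  obtain ⟨hX', hU', hY'⟩ := CCRfeas_iff.1 h'
  have hlapX' : graphLaplacian a X' = 0 := graphLaplacian_eq_zero_of_forall_eq hX'
  have hU : ∑ i, frobInner (CCRresidual Al Fv Yv U i) (U' i) = 0 := by
    simp only [hU', sum_frobInner_graphLaplacian hsym, hL2, Pi.zero_apply, frobInner_zero_left,
      Finset.sum_const_zero]
  have hY : ∑ i, frobInner (CCRresidual Al Fv Yv U i) (Al i * Yv' i) = 0 := by
    have hembed i : embedRow i (Yv' i) = X' i * embedCol i (Bl i) + graphLaplacian a Z' i := by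
      rw [← sub_eq_zero, ← sub_sub, hY' i]
    calc ∑ i, frobInner (CCRresidual Al Fv Yv U i) (Al i * Yv' i)
        = -∑ i, frobInner (embedRow i (Yv' i)) (L3 i) := by
          rw [← Finset.sum_neg_distrib]
          refine Finset.sum_congr rfl fun i _ => ?_
          rw [← frobInner_transpose_mul_left, ← neg_neg ((Al i)ᵀ * _), ← hrowL3 i,
            frobInner_neg_left, frobInner_comm, frobInner_embedRow]
      _ = -(∑ i, frobInner (X' i) (graphLaplacian a L1 i + graphLaplacian a X i)
            + ∑ i, frobInner (Z' i) (graphLaplacian a L3 i)) := by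
          rw [sum_frobInner_graphLaplacian hsym Z', ← Finset.sum_add_distrib]
          refine congrArg _ (Finset.sum_congr rfl fun i _ => ?_)
          rw [hembed, frobInner_add_left, ← hL1, frobInner_comm, ← frobInner_mul_transpose_left,
            frobInner_comm]
      _ = 0 := by
          simp only [hX, hL3, Pi.zero_apply, add_zero, frobInner_zero_right,
            Finset.sum_const_zero, sum_frobInner_graphLaplacian hsym X', hlapX',
            frobInner_zero_left, neg_zero]
  simp only [frobInner_sub_right, Finset.sum_sub_distrib, hY, hU, sub_zero]

theorem CCRstationary.graphLaplacian_residual_eq_zero (hsym : ∀ i j, a i j = a j i)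
    (h : CCRstationary a Al Bl Fv Yv U) : graphLaplacian a (CCRresidual Al Fv Yv U) = 0 := by
  have hfeas : CCRfeas (rdim := rdim) a Bl 0 0 0
      (graphLaplacian a (-graphLaplacian a (CCRresidual Al Fv Yv U)))
      (-graphLaplacian a (CCRresidual Al Fv Yv U)) :=
    CCRfeas_iff.2 ⟨fun _ _ => rfl, fun _ => rfl, fun i => by
      simp [graphLaplacian_apply, embedRow_zero]⟩
  have hsq : ∑ i, frobSq (graphLaplacian a (CCRresidual Al Fv Yv U) i) = 0 := by
    have := h _ _ _ _ _ hfeas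
    simp only [Pi.zero_apply, Matrix.mul_zero, zero_sub, map_neg, Pi.neg_apply, neg_neg] at this
    rwa [sum_frobInner_graphLaplacian hsym] at this
  ext1 i
  exact frobSq_eq_zero_iff.1 ((Finset.sum_eq_zero_iff_of_nonneg fun i _ =>
    frobSq_nonneg _).1 hsq i (Finset.mem_univ i))

theorem CCRstationary.blockRows_mul_transpose_eq_zero (hsym : ∀ i j, a i j = a j i)
    (hnonneg : ∀ i j, 0 ≤ a i j) (hconn : GraphConnected a) (h : CCRstationary a Al Bl Fv Yv U) :
    blockRows (fun i => (Al i)ᵀ * CCRresidual Al Fv Yv U i) * (∑ i, embedCol i (Bl i))ᵀ = 0 := by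
  set H := blockRows fun i => (Al i)ᵀ * CCRresidual Al Fv Yv U i
  set B := ∑ i, embedCol i (Bl i)
  suffices hH : ∀ Xh, frobInner (H * Bᵀ) Xh = 0 from frobSq_eq_zero_iff.1 (hH _)
  intro Xh
  obtain ⟨Zh, hZh⟩ : ∃ Zh, graphLaplacian a Zh =
      fun i => embedRow i (rowBlk (Xh * B) i) - Xh * embedCol i (Bl i) :=
    exists_graphLaplacian_eq hsym hnonneg hconn <| by
      rw [Finset.sum_sub_distrib, sum_embedRow_rowBlk, ← Matrix.mul_sum, sub_self]
  have hfeas : CCRfeas (mdim := mdim) a Bl (fun _ => Xh) (fun i => rowBlk (Xh * B) i) Zh 0 0 :=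
    CCRfeas_iff.2 ⟨fun _ _ => rfl, fun i => by simp [graphLaplacian_apply],
      fun i => by rw [hZh, sub_self]⟩
  have := h _ _ _ _ _ hfeas
  simp only [Pi.zero_apply, sub_zero] at this
  calc frobInner (H * Bᵀ) Xh
        = ∑ i, frobInner ((Al i)ᵀ * CCRresidual Al Fv Yv U i) (rowBlk (Xh * B) i) := by
        rw [frobInner_mul_transpose_left, frobInner_blockRows]
    _ = 0 := by simpa only [frobInner_transpose_mul_left] using this

theorem CCRstationary.exists_CCRequil (hsym : ∀ i j, a i j = a j i)
    (hnonneg : ∀ i j, 0 ≤ a i j) (hconn : GraphConnected a) (hfeas : CCRfeas a Bl X Yv Z U W)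
    (h : CCRstationary a Al Bl Fv Yv U) : ∃ L1 L2 L3, CCRequil a Al Bl Fv X Yv Z U W L1 L2 L3 := by
  obtain ⟨hX, hU, hY⟩ := CCRfeas_iff.1 hfeas
  set H := blockRows fun i => (Al i)ᵀ * CCRresidual Al Fv Yv U i
  obtain ⟨L1, hL1⟩ : ∃ L1, graphLaplacian a L1 = fun i => -H * (embedCol i (Bl i))ᵀ :=
    exists_graphLaplacian_eq hsym hnonneg hconn <| by
      rw [← Matrix.mul_sum, ← transpose_sum, Matrix.neg_mul,
        h.blockRows_mul_transpose_eq_zero hsym hnonneg hconn, neg_zero]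
  have hlapX := graphLaplacian_eq_zero_of_forall_eq (a := a) hX
  refine ⟨L1, CCRresidual Al Fv Yv U, fun _ => -H, CCRequil_iff.2
    ⟨fun i => ?_, fun i => rfl, rfl, h.graphLaplacian_residual_eq_zero hsym,
      graphLaplacian_eq_zero_of_forall_eq fun _ _ => rfl, hlapX, hU, hY⟩⟩
  rw [hL1, hlapX, Pi.zero_apply, add_zero]

end CCR

theorem stmt_12_general (n p : ℕ) (rdim qdim mdim : Fin n → ℕ)
    (a : Matrix (Fin n) (Fin n) ℝ)
    (hsym : ∀ i j, a i j = a j i) (hnonneg : ∀ i j, 0 ≤ a i j)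
    (hconn : GraphConnected a)
    (Al : ∀ i, Matrix ((i' : Fin n) × Fin (mdim i')) (Fin (rdim i)) ℝ)
    (Bl : ∀ i, Matrix (Fin p) (Fin (qdim i)) ℝ)
    (Fv : ∀ i, Matrix (Fin (mdim i)) ((i' : Fin n) × Fin (qdim i')) ℝ)
    (X : Fin n → Matrix ((i : Fin n) × Fin (rdim i)) (Fin p) ℝ)
    (Yv : ∀ i, Matrix (Fin (rdim i)) ((i' : Fin n) × Fin (qdim i')) ℝ)
    (Z : Fin n → Matrix ((i : Fin n) × Fin (rdim i)) ((i' : Fin n) × Fin (qdim i')) ℝ)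
    (U W : Fin n → Matrix ((i : Fin n) × Fin (mdim i)) ((i' : Fin n) × Fin (qdim i')) ℝ) :
    (CCRfeas a Bl X Yv Z U W ∧
        ∀ X' : Fin n → Matrix ((i : Fin n) × Fin (rdim i)) (Fin p) ℝ,
          ∀ Yv' : ∀ i, Matrix (Fin (rdim i)) ((i' : Fin n) × Fin (qdim i')) ℝ,
            ∀ Z' : Fin n → Matrix ((i : Fin n) × Fin (rdim i)) ((i' : Fin n) × Fin (qdim i')) ℝ,
              ∀ U' W' : Fin n → Matrix ((i : Fin n) × Fin (mdim i)) ((i' : Fin n) × Fin (qdim i')) ℝ,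
                CCRfeas a Bl X' Yv' Z' U' W' →
                  CCRobj Al Fv Yv U ≤ CCRobj Al Fv Yv' U') ↔
      (∃ L1 : Fin n → Matrix ((i : Fin n) × Fin (rdim i)) (Fin p) ℝ,
        ∃ L2 : Fin n → Matrix ((i : Fin n) × Fin (mdim i)) ((i' : Fin n) × Fin (qdim i')) ℝ,
          ∃ L3 : Fin n → Matrix ((i : Fin n) × Fin (rdim i)) ((i' : Fin n) × Fin (qdim i')) ℝ,
            CCRequil a Al Bl Fv X Yv Z U W L1 L2 L3) := by
  constructor
  · rintro ⟨hfeas, hmin⟩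
    exact (hfeas.minimizes_iff_stationary.1 hmin).exists_CCRequil hsym hnonneg hconn hfeas
  · rintro ⟨L1, L2, L3, h⟩
    have hfeas := h.feas hsym hnonneg hconn
    exact ⟨hfeas, hfeas.minimizes_iff_stationary.2 (h.stationary hsym)⟩

theorem stmt_12 (n p : ℕ) (hn : 0 < n) (rdim qdim mdim : Fin n → ℕ)
    (a : Matrix (Fin n) (Fin n) ℝ)
    (hsym : ∀ i j, a i j = a j i) (hnonneg : ∀ i j, 0 ≤ a i j)
    (hdiag : ∀ i, a i i = 0) (hconn : GraphConnected a)
    (Al : ∀ i, Matrix ((i' : Fin n) × Fin (mdim i')) (Fin (rdim i)) ℝ)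
    (Bl : ∀ i, Matrix (Fin p) (Fin (qdim i)) ℝ)
    (Fv : ∀ i, Matrix (Fin (mdim i)) ((i' : Fin n) × Fin (qdim i')) ℝ)
    (X : Fin n → Matrix ((i : Fin n) × Fin (rdim i)) (Fin p) ℝ)
    (Yv : ∀ i, Matrix (Fin (rdim i)) ((i' : Fin n) × Fin (qdim i')) ℝ)
    (Z : Fin n → Matrix ((i : Fin n) × Fin (rdim i)) ((i' : Fin n) × Fin (qdim i')) ℝ)
    (U W : Fin n → Matrix ((i : Fin n) × Fin (mdim i)) ((i' : Fin n) × Fin (qdim i')) ℝ) :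
    (CCRfeas a Bl X Yv Z U W ∧
        ∀ X' : Fin n → Matrix ((i : Fin n) × Fin (rdim i)) (Fin p) ℝ,
          ∀ Yv' : ∀ i, Matrix (Fin (rdim i)) ((i' : Fin n) × Fin (qdim i')) ℝ,
            ∀ Z' : Fin n → Matrix ((i : Fin n) × Fin (rdim i)) ((i' : Fin n) × Fin (qdim i')) ℝ,
              ∀ U' W' : Fin n → Matrix ((i : Fin n) × Fin (mdim i)) ((i' : Fin n) × Fin (qdim i')) ℝ,
                CCRfeas a Bl X' Yv' Z' U' W' →
                  CCRobj Al Fv Yv U ≤ CCRobj Al Fv Yv' U') ↔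
      (∃ L1 : Fin n → Matrix ((i : Fin n) × Fin (rdim i)) (Fin p) ℝ,
        ∃ L2 : Fin n → Matrix ((i : Fin n) × Fin (mdim i)) ((i' : Fin n) × Fin (qdim i')) ℝ,
          ∃ L3 : Fin n → Matrix ((i : Fin n) × Fin (rdim i)) ((i' : Fin n) × Fin (qdim i')) ℝ,
            CCRequil a Al Bl Fv X Yv Z U W L1 L2 L3) :=
  stmt_12_general n p rdim qdim mdim a hsym hnonneg hconn Al Bl Fv X Yv Z U W
end
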